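/- arXiv:2208.06230 — 5 statements merged into one kernel-verified Lean document; each statement's English description precedes it below -/
import Mathlib

section
/- Let D be a positive integer and let f : ℕ → ℂ be a multiplicative function with |Λ_f(n)| ≤ D·Λ(n) for all n ≥ 1. Let f⁻¹ denote the inverse of f under Dirichlet convolution (which exists since f(1) = 1). Then f⁻¹ is multiplicative with |Λ_{f⁻¹}(n)| ≤ D·Λ(n) for all n ≥ 1, and moreover |f(n)| ≤ τ_D(n) and |f⁻¹(n)| ≤ τ_D(n) for all n ≥ 1. -/
open scoped BigOperators
open Finset

noncomputable section

/-- Dirichlet convolution of two functions `ℕ → ℂ`. -/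
def dirConv (f g : ℕ → ℂ) : ℕ → ℂ :=
  fun n => ∑ p ∈ n.divisorsAntidiagonal, f p.1 * g p.2

/-- `f` is multiplicative: `f 1 = 1` and `f (m*n) = f m * f n` for coprime `m, n`. -/
def IsMultiplicativeFn (f : ℕ → ℂ) : Prop :=
  f 1 = 1 ∧ ∀ m n : ℕ, Nat.Coprime m n → f (m * n) = f m * f n

/-- `Λf` satisfies the defining property of `Λ_f`: it vanishes at `1` and
`f(n) log n = ∑_{d ∣ n} Λ_f(d) f(n/d)` for all `n ≥ 1`. -/
def IsLambdaOf (Λf f : ℕ → ℂ) : Prop :=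
  Λf 1 = 0 ∧ ∀ n : ℕ, 1 ≤ n →
    f n * (Real.log n : ℂ) = ∑ d ∈ n.divisors, Λf d * f (n / d)

/-- The `k`-fold divisor function `τ_k(n) = ∑_{d₁⋯d_k = n} 1`. -/
def tauk (k : ℕ) : ℕ → ℕ :=
  fun n => ((ArithmeticFunction.zeta : ArithmeticFunction ℕ) ^ k) n

open ArithmeticFunction
open scoped ArithmeticFunction.zeta

def Lder {R : Type*} [CommRing R] [Algebra ℝ R] (h : ArithmeticFunction R) : ArithmeticFunction R :=
  ⟨fun n => Real.log n • h n, by simp⟩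

@[simp] lemma Lder_apply {R : Type*} [CommRing R] [Algebra ℝ R] (h : ArithmeticFunction R) (n : ℕ) :
    Lder h n = Real.log n • h n := rfl

lemma Lder_mul {R : Type*} [CommRing R] [Algebra ℝ R] (a b : ArithmeticFunction R) :
    Lder (a * b) = Lder a * b + a * Lder b := by
  ext n
  simp only [Lder_apply, ArithmeticFunction.mul_apply, ArithmeticFunction.add_apply]
  rw [Finset.smul_sum, ← Finset.sum_add_distrib]
  refine Finset.sum_congr rfl ?_
  rintro ⟨x, y⟩ hxy
  rw [Nat.mem_divisorsAntidiagonal] at hxy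
  obtain ⟨hxyn, hn0⟩ := hxy
  have hx : (x : ℝ) ≠ 0 := by
    simp only [ne_eq, Nat.cast_eq_zero]
    rintro rfl; simp at hxyn; exact hn0 hxyn.symm
  have hy : (y : ℝ) ≠ 0 := by
    simp only [ne_eq, Nat.cast_eq_zero]
    rintro rfl; simp at hxyn; exact hn0 hxyn.symm
  subst hxyn
  simp only
  rw [Nat.cast_mul, Real.log_mul hx hy, add_smul, smul_mul_assoc, mul_smul_comm]

lemma Lder_one {R : Type*} [CommRing R] [Algebra ℝ R] : Lder (1 : ArithmeticFunction R) = 0 := by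
  ext n
  simp only [Lder_apply, ArithmeticFunction.one_apply, ArithmeticFunction.zero_apply]
  split
  · next h => subst h; simp
  · simp

def Λmul (k : ℕ) : ArithmeticFunction ℝ :=
  ⟨fun n => (k : ℝ) * ArithmeticFunction.vonMangoldt n, by simp⟩

@[simp] lemma Λmul_apply (k n : ℕ) : Λmul k n = (k : ℝ) * ArithmeticFunction.vonMangoldt n := rfl

lemma Lder_zeta : Lder ((ζ : ArithmeticFunction ℕ) : ArithmeticFunction ℝ) = ArithmeticFunction.log := by
  ext n
  rcases eq_or_ne n 0 with rfl | hn
  · simp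
  · simp [ArithmeticFunction.log_apply, ArithmeticFunction.natCoe_apply,
      ArithmeticFunction.zeta_apply, hn, smul_eq_mul]

lemma Lder_zeta_pow (k : ℕ) :
    Lder (((ζ : ArithmeticFunction ℕ) : ArithmeticFunction ℝ) ^ k)
      = Λmul k * ((ζ : ArithmeticFunction ℕ) : ArithmeticFunction ℝ) ^ k := by
  induction k with
  | zero =>
    simp only [pow_zero, Lder_one]
    ext n
    simp [ArithmeticFunction.mul_apply]
  | succ k ih =>
    have hadd : Λmul (k + 1) = ArithmeticFunction.vonMangoldt + Λmul k := by
      ext n; simp [add_mul]; ring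
    rw [pow_succ']
    rw [Lder_mul, Lder_zeta, ih, ← ArithmeticFunction.vonMangoldt_mul_zeta, hadd, add_mul]
    ring

lemma natCoe_pow (k : ℕ) (F : ArithmeticFunction ℕ) :
    ((F ^ k : ArithmeticFunction ℕ) : ArithmeticFunction ℝ)
      = (F : ArithmeticFunction ℝ) ^ k := by
  induction k with
  | zero => simp [pow_zero]
  | succ k ih => rw [pow_succ, pow_succ, ArithmeticFunction.natCoe_mul, ih]

lemma zeta_pow_cast (k m : ℕ) :
    (((ζ : ArithmeticFunction ℕ) : ArithmeticFunction ℝ) ^ k) m = (tauk k m : ℝ) := by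
  rw [← natCoe_pow, ArithmeticFunction.natCoe_apply, tauk]

lemma tau_identity (k n : ℕ) (hn : 1 ≤ n) :
    (tauk k n : ℝ) * Real.log n
      = ∑ d ∈ n.divisors, (k : ℝ) * ArithmeticFunction.vonMangoldt d * (tauk k (n / d) : ℝ) := by
  have h := congrArg (fun F : ArithmeticFunction ℝ => F n) (Lder_zeta_pow k)
  simp only [Lder_apply, ArithmeticFunction.mul_apply, smul_eq_mul] at h
  rw [zeta_pow_cast] at h
  rw [mul_comm, h, Nat.sum_divisorsAntidiagonal (fun a b => Λmul k a * ((((ζ : ArithmeticFunction ℕ) : ArithmeticFunction ℝ)) ^ k) b)]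
  refine Finset.sum_congr rfl fun p hp => ?_
  rw [Λmul_apply, zeta_pow_cast]

lemma tauk_one (k : ℕ) : tauk k 1 = 1 := by
  induction k with
  | zero => simp [tauk]
  | succ k ih =>
    simp only [tauk, pow_succ, ArithmeticFunction.mul_apply] at *
    rw [Nat.divisorsAntidiagonal_one]
    simp only [Finset.sum_singleton]
    simp [ih, ArithmeticFunction.zeta_apply]

lemma norm_le_tauk (D : ℕ) (h Λh : ℕ → ℂ) (h1 : h 1 = 1) (hΛ1 : Λh 1 = 0)
    (hrec : ∀ n : ℕ, 1 ≤ n → h n * (Real.log n : ℂ) = ∑ d ∈ n.divisors, Λh d * h (n / d))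
    (hbd : ∀ n : ℕ, 1 ≤ n → ‖Λh n‖ ≤ D * ArithmeticFunction.vonMangoldt n) :
    ∀ n : ℕ, 1 ≤ n → ‖h n‖ ≤ (tauk D n : ℝ) := by
  intro n
  induction n using Nat.strong_induction_on with
  | _ n ih =>
  intro hn
  rcases eq_or_lt_of_le hn with h1n | h2n
  · rw [← h1n, h1, tauk_one]; simp
  have hn0 : n ≠ 0 := by omega
  have hlog : 0 < Real.log n := Real.log_pos (by exact_mod_cast h2n)
  have key : ‖h n‖ * Real.log n ≤ (tauk D n : ℝ) * Real.log n := by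
    calc ‖h n‖ * Real.log n = ‖h n * (Real.log n : ℂ)‖ := by
          rw [norm_mul, Complex.norm_real, Real.norm_of_nonneg hlog.le]
      _ = ‖∑ d ∈ n.divisors, Λh d * h (n / d)‖ := by rw [hrec n hn]
      _ ≤ ∑ d ∈ n.divisors, ‖Λh d * h (n / d)‖ := norm_sum_le _ _
      _ ≤ ∑ d ∈ n.divisors, (D : ℝ) * ArithmeticFunction.vonMangoldt d * (tauk D (n / d) : ℝ) := by
          refine Finset.sum_le_sum fun d hd => ?_
          rw [Nat.mem_divisors] at hd
          obtain ⟨hdvd, -⟩ := hd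
          have hd1 : 1 ≤ d := Nat.one_le_iff_ne_zero.mpr (by rintro rfl; exact hn0 (Nat.zero_dvd.mp hdvd))
          rcases eq_or_lt_of_le hd1 with hd1' | hd2
          · rw [← hd1', hΛ1]
            simp only [norm_mul, norm_zero, zero_mul]
            exact mul_nonneg (mul_nonneg (Nat.cast_nonneg _) ArithmeticFunction.vonMangoldt_nonneg) (Nat.cast_nonneg _)
          · have hlt : n / d < n := Nat.div_lt_self (by omega) hd2
            have hge : 1 ≤ n / d := Nat.one_le_div_iff (by omega) |>.mpr (Nat.le_of_dvd (by omega) hdvd)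
            rw [norm_mul]
            exact mul_le_mul (hbd d hd1) (ih _ hlt hge) (norm_nonneg _)
              (mul_nonneg (Nat.cast_nonneg _) ArithmeticFunction.vonMangoldt_nonneg)
      _ = (tauk D n : ℝ) * Real.log n := (tau_identity D n hn).symm
  exact le_of_mul_le_mul_right key hlog

lemma lambda_unique (h Λ1 Λ2 : ℕ → ℂ) (h1 : h 1 = 1) (ha1 : Λ1 1 = 0) (hb1 : Λ2 1 = 0)
    (r1 : ∀ n : ℕ, 1 ≤ n → h n * (Real.log n : ℂ) = ∑ d ∈ n.divisors, Λ1 d * h (n / d))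
    (r2 : ∀ n : ℕ, 1 ≤ n → h n * (Real.log n : ℂ) = ∑ d ∈ n.divisors, Λ2 d * h (n / d)) :
    ∀ n : ℕ, 1 ≤ n → Λ1 n = Λ2 n := by
  intro n
  induction n using Nat.strong_induction_on with
  | _ n ih =>
  intro hn
  rcases eq_or_lt_of_le hn with h1n | h2n
  · rw [← h1n, ha1, hb1]
  have hn0 : n ≠ 0 := by omega
  have hmem : n ∈ n.divisors := Nat.mem_divisors_self n hn0
  have heq : ∑ d ∈ n.divisors, Λ1 d * h (n / d) = ∑ d ∈ n.divisors, Λ2 d * h (n / d) := by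
    rw [← r1 n hn, ← r2 n hn]
  rw [← Finset.add_sum_erase _ _ hmem, ← Finset.add_sum_erase _ _ hmem] at heq
  have herase : ∑ d ∈ n.divisors.erase n, Λ1 d * h (n / d)
      = ∑ d ∈ n.divisors.erase n, Λ2 d * h (n / d) := by
    refine Finset.sum_congr rfl fun d hd => ?_
    rw [Finset.mem_erase, Nat.mem_divisors] at hd
    obtain ⟨hne, hdvd, -⟩ := hd
    have hd1 : 1 ≤ d := Nat.one_le_iff_ne_zero.mpr (by rintro rfl; exact hn0 (Nat.zero_dvd.mp hdvd))
    have hlt : d < n := lt_of_le_of_ne (Nat.le_of_dvd (by omega) hdvd) hne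
    rw [ih d hlt hd1]
  rw [herase, Nat.div_self (by omega), h1, mul_one, mul_one] at heq
  exact add_right_cancel heq

def mkAF (f : ℕ → ℂ) : ArithmeticFunction ℂ := ⟨fun n => if n = 0 then 0 else f n, by simp⟩

@[simp] lemma mkAF_apply (f : ℕ → ℂ) (n : ℕ) : mkAF f n = if n = 0 then 0 else f n := rfl

lemma mul_mkAF_apply (a b : ℕ → ℂ) {n : ℕ} (hn : n ≠ 0) :
    (mkAF a * mkAF b) n = ∑ d ∈ n.divisors, a d * b (n / d) := by
  rw [ArithmeticFunction.mul_apply,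
    Nat.sum_divisorsAntidiagonal (fun x y => mkAF a x * mkAF b y)]
  refine Finset.sum_congr rfl fun d hd => ?_
  rw [Nat.mem_divisors] at hd
  have hd0 : d ≠ 0 := by rintro rfl; exact hd.2 (Nat.zero_dvd.mp hd.1)
  have hnd0 : n / d ≠ 0 :=
    (Nat.div_pos (Nat.le_of_dvd (Nat.pos_of_ne_zero hn) hd.1) (Nat.pos_of_ne_zero hd0)).ne'
  simp [hd0, hnd0]

lemma dirConv_divisors (f g : ℕ → ℂ) {n : ℕ} (hn : n ≠ 0) :
    dirConv f g n = ∑ d ∈ n.divisors, f d * g (n / d) :=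
  Nat.sum_divisorsAntidiagonal (fun x y => f x * g y)

lemma conv_one (f g : ℕ → ℂ)
    (hg : ∀ n : ℕ, 1 ≤ n → dirConv f g n = if n = 1 then 1 else 0) :
    mkAF f * mkAF g = 1 := by
  ext n
  rcases eq_or_ne n 0 with rfl | hn
  · simp
  rw [mul_mkAF_apply f g hn, ← dirConv_divisors f g hn, hg n (Nat.one_le_iff_ne_zero.mpr hn),
    ArithmeticFunction.one_apply]

lemma g_one (f g : ℕ → ℂ) (hf1 : f 1 = 1)
    (hg : ∀ n : ℕ, 1 ≤ n → dirConv f g n = if n = 1 then 1 else 0) : g 1 = 1 := by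
  have := hg 1 le_rfl
  simp only [dirConv, Nat.divisorsAntidiagonal_one, Finset.sum_singleton, if_pos rfl] at this
  rw [hf1, one_mul] at this
  simpa using this

lemma Lder_mkAF (f Λf : ℕ → ℂ)
    (hΛf : ∀ n : ℕ, 1 ≤ n → f n * (Real.log n : ℂ) = ∑ d ∈ n.divisors, Λf d * f (n / d)) :
    Lder (mkAF f) = mkAF Λf * mkAF f := by
  ext n
  rcases eq_or_ne n 0 with rfl | hn
  · simp
  rw [Lder_apply, mul_mkAF_apply Λf f hn, ← hΛf n (Nat.one_le_iff_ne_zero.mpr hn),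
    mkAF_apply, if_neg hn, Complex.real_smul, mul_comm]

lemma Lder_inv (F G ΛF : ArithmeticFunction ℂ) (hFG : F * G = 1) (hLF : Lder F = ΛF * F) :
    Lder G = -(ΛF * G) := by
  have h0 : Lder F * G + F * Lder G = 0 := by rw [← Lder_mul, hFG, Lder_one]
  linear_combination G * h0 - Lder G * hFG - G^2 * hLF - ΛF * G * hFG

lemma inv_identity (f Λf g : ℕ → ℂ)
    (hΛf2 : ∀ n : ℕ, 1 ≤ n → f n * (Real.log n : ℂ) = ∑ d ∈ n.divisors, Λf d * f (n / d))
    (hg : ∀ n : ℕ, 1 ≤ n → dirConv f g n = if n = 1 then 1 else 0) :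
    ∀ n : ℕ, 1 ≤ n →
      g n * (Real.log n : ℂ) = ∑ d ∈ n.divisors, (-Λf d) * g (n / d) := by
  have hFG := conv_one f g hg
  have hLG := Lder_inv (mkAF f) (mkAF g) (mkAF Λf) hFG (Lder_mkAF f Λf hΛf2)
  intro n hn
  have hn0 : n ≠ 0 := by omega
  have := congrArg (fun F : ArithmeticFunction ℂ => F n) hLG
  have hneg : (-(mkAF Λf * mkAF g)) n = -((mkAF Λf * mkAF g) n) := rfl
  rw [Lder_apply] at this
  rw [hneg, mul_mkAF_apply Λf g hn0, mkAF_apply, if_neg hn0, Complex.real_smul, mul_comm] at this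
  rw [this, ← Finset.sum_neg_distrib]
  exact Finset.sum_congr rfl fun d _ => by ring

def mkH (G : ArithmeticFunction ℂ) : ArithmeticFunction ℂ :=
  ⟨fun n => if n = 0 then 0 else ∏ p ∈ n.primeFactors, G (p ^ n.factorization p), by simp⟩

@[simp] lemma mkH_apply (G : ArithmeticFunction ℂ) (n : ℕ) :
    mkH G n = if n = 0 then 0 else ∏ p ∈ n.primeFactors, G (p ^ n.factorization p) := by
  simp [mkH, ArithmeticFunction.coe_mk]

lemma mkH_one (G : ArithmeticFunction ℂ) : mkH G 1 = 1 := by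
  simp

lemma mkH_isMultiplicative (G : ArithmeticFunction ℂ) : (mkH G).IsMultiplicative := by
  refine ⟨mkH_one G, ?_⟩
  intro m n hmn
  rcases eq_or_ne m 0 with rfl | hm
  · have : n = 1 := by simpa using hmn
    subst this
    simp [mkH_one, ArithmeticFunction.map_zero]
  rcases eq_or_ne n 0 with rfl | hn
  · have : m = 1 := by simpa [Nat.coprime_zero_right] using hmn
    subst this
    simp [mkH_one, ArithmeticFunction.map_zero]
  have hmn0 : m * n ≠ 0 := mul_ne_zero hm hn
  rw [mkH_apply, mkH_apply, mkH_apply, if_neg hmn0, if_neg hm, if_neg hn]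
  rw [Nat.primeFactors_mul hm hn,
    Finset.prod_union (Nat.Coprime.disjoint_primeFactors hmn)]
  congr 1
  · refine Finset.prod_congr rfl fun p hp => ?_
    have hpn : ¬ p ∣ n := fun hdvd => by
      have : p ∈ n.primeFactors := Nat.mem_primeFactors.mpr ⟨(Nat.mem_primeFactors.mp hp).1, hdvd, hn⟩
      exact (Finset.disjoint_left.mp (Nat.Coprime.disjoint_primeFactors hmn) hp) this
    rw [Nat.factorization_mul hm hn, Finsupp.add_apply,
      Nat.factorization_eq_zero_of_not_dvd hpn, add_zero]
  · refine Finset.prod_congr rfl fun p hp => ?_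
    have hpm : ¬ p ∣ m := fun hdvd => by
      have : p ∈ m.primeFactors := Nat.mem_primeFactors.mpr ⟨(Nat.mem_primeFactors.mp hp).1, hdvd, hm⟩
      exact (Finset.disjoint_right.mp (Nat.Coprime.disjoint_primeFactors hmn) hp) this
    rw [Nat.factorization_mul hm hn, Finsupp.add_apply,
      Nat.factorization_eq_zero_of_not_dvd hpm, zero_add]

lemma mkH_prime_pow (G : ArithmeticFunction ℂ) (hG1 : G 1 = 1) {p : ℕ} (hp : p.Prime) (j : ℕ) :
    mkH G (p ^ j) = G (p ^ j) := by
  rcases eq_or_ne j 0 with rfl | hj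
  · simp [mkH_one, hG1]
  rw [mkH_apply, if_neg (pow_ne_zero j hp.ne_zero)]
  rw [Nat.primeFactors_pow _ hj, Nat.Prime.primeFactors hp, Finset.prod_singleton,
    hp.factorization_pow, Finsupp.single_eq_same]

lemma mkAF_isMultiplicative (f : ℕ → ℂ) (hf : IsMultiplicativeFn f) :
    (mkAF f).IsMultiplicative := by
  refine ⟨by simp [hf.1], ?_⟩
  intro m n hmn
  rcases eq_or_ne m 0 with rfl | hm
  · simp
  rcases eq_or_ne n 0 with rfl | hn
  · simp
  simp only [mkAF_apply, if_neg hm, if_neg hn, if_neg (mul_ne_zero hm hn)]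
  exact hf.2 m n hmn

lemma g_mult (f g : ℕ → ℂ) (hf : IsMultiplicativeFn f)
    (hg : ∀ n : ℕ, 1 ≤ n → dirConv f g n = if n = 1 then 1 else 0) :
    IsMultiplicativeFn g := by
  have hg1 : g 1 = 1 := g_one f g hf.1 hg
  have hFG : mkAF f * mkAF g = 1 := conv_one f g hg
  have hG1 : mkAF g 1 = 1 := by simp [hg1]
  have hFH : mkAF f * mkH (mkAF g) = 1 := by
    rw [ArithmeticFunction.IsMultiplicative.eq_iff_eq_on_prime_powers _
      ((mkAF_isMultiplicative f hf).mul (mkH_isMultiplicative (mkAF g)))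
      _ ArithmeticFunction.isMultiplicative_one]
    intro p i hp
    have hsum : (mkAF f * mkH (mkAF g)) (p ^ i) = (mkAF f * mkAF g) (p ^ i) := by
      rw [ArithmeticFunction.mul_apply, ArithmeticFunction.mul_apply]
      refine Finset.sum_congr rfl fun q hq => ?_
      rw [Nat.mem_divisorsAntidiagonal] at hq
      have hdvd : q.2 ∣ p ^ i := Dvd.intro_left q.1 hq.1
      obtain ⟨j, -, hj⟩ := (Nat.dvd_prime_pow hp).mp hdvd
      rw [hj, mkH_prime_pow (mkAF g) hG1 hp j]
    rw [hsum, hFG]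
  have hGH : mkAF g = mkH (mkAF g) := by
    calc mkAF g = mkAF g * 1 := (mul_one _).symm
      _ = mkAF g * (mkAF f * mkH (mkAF g)) := by rw [hFH]
      _ = (mkAF f * mkAF g) * mkH (mkAF g) := by ring
      _ = 1 * mkH (mkAF g) := by rw [hFG]
      _ = mkH (mkAF g) := one_mul _
  refine ⟨hg1, ?_⟩
  intro m n hmn
  rcases eq_or_ne m 0 with rfl | hm
  · have : n = 1 := by simpa using hmn
    subst this; rw [hg1, mul_one, mul_one]
  rcases eq_or_ne n 0 with rfl | hn
  · have : m = 1 := by simpa [Nat.coprime_zero_right] using hmn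
    subst this; rw [hg1, mul_zero, one_mul]
  have key := (mkH_isMultiplicative (mkAF g)).2 hmn
  rw [← hGH] at key
  simpa [mkAF_apply, hm, hn, mul_ne_zero hm hn] using key

theorem dirichlet_inverse_in_class (D : ℕ) (hD : 0 < D)
    (f Λf : ℕ → ℂ) (hf : IsMultiplicativeFn f) (hΛf : IsLambdaOf Λf f)
    (hΛbd : ∀ n : ℕ, 1 ≤ n → ‖Λf n‖ ≤ D * ArithmeticFunction.vonMangoldt n)
    (g : ℕ → ℂ) (hg : ∀ n : ℕ, 1 ≤ n → dirConv f g n = if n = 1 then 1 else 0) :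
    IsMultiplicativeFn g ∧
      (∀ Λg : ℕ → ℂ, IsLambdaOf Λg g →
        ∀ n : ℕ, 1 ≤ n → ‖Λg n‖ ≤ D * ArithmeticFunction.vonMangoldt n) ∧
      (∀ n : ℕ, 1 ≤ n → ‖f n‖ ≤ tauk D n) ∧
      (∀ n : ℕ, 1 ≤ n → ‖g n‖ ≤ tauk D n) := by
  obtain ⟨hΛf1, hΛf2⟩ := hΛf
  have hg1 : g 1 = 1 := g_one f g hf.1 hg
  have hB := inv_identity f Λf g hΛf2 hg
  refine ⟨g_mult f g hf hg, ?_, ?_, ?_⟩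
  · intro Λg hΛg n hn
    obtain ⟨hΛg1, hΛg2⟩ := hΛg
    have huniq := lambda_unique g Λg (fun d => -Λf d) hg1 hΛg1 (by simp [hΛf1]) hΛg2 hB
    rw [huniq n hn, norm_neg]
    exact hΛbd n hn
  · exact norm_le_tauk D f Λf hf.1 hΛf1 hΛf2 hΛbd
  · exact norm_le_tauk D g (fun d => -Λf d) hg1 (by simp [hΛf1]) hB
      (fun n hn => by rw [norm_neg]; exact hΛbd n hn)
end
end

section
/- Let a_1, …, a_k be positive real numbers, where k is a positive integer, and let y ≥ 0. Then the number of k-tuples (ν_1, …, ν_k) of positive integers with ∑_{j=1}^k a_j·ν_j ≤ y is at most (y + ∑_{j=1}^k a_j)^k / (k!·∏_{j=1}^k a_j). -/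
/-!
Induct on `k`, fibering the lattice points over the value `m` of the last coordinate: the fiber
over `m ∈ [1, ⌊y / a_k⌋]` is the set of lattice points for `a_1, …, a_{k-1}` and budget
`y - a_k m`. By induction each fiber has at most `(y + s - a_k m) ^ (k-1) / ((k-1)! ∏_{j<k} a_j)`
points, `s = ∑_{j<k} a_j`, and the sum over `m` of these powers is bounded, as a Riemann sum of
the decreasing function `x ↦ x ^ (k-1)`, by `(y + s) ^ k / (k a_k)`.
-/

open Finset Nat

-- Bernoulli gives `(n + 1) c u ^ n ≤ (u + c) ^ (n + 1) - u ^ (n + 1)` for `u ≥ 0`, which telescopes.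
theorem mul_sum_Icc_sub_mul_pow_le {c t : ℝ} (n : ℕ) (hc : 0 < c) :
    ∀ M : ℕ, c * M ≤ t →
      (n + 1) * c * ∑ m ∈ Icc 1 M, (t - c * m) ^ n ≤ t ^ (n + 1) - (t - c * M) ^ (n + 1)
  | 0, _ => by simp
  | M + 1, hM => by
    push_cast at hM ⊢
    have hu : 0 ≤ t - c * (M + 1) := by linarith
    have hbernoulli := pow_add_mul_le_add_pow (b := c) hu (by linarith) (n + 1)
    have ih := mul_sum_Icc_sub_mul_pow_le (t := t) n hc M (by linarith)
    rw [sum_Icc_succ_top (by omega), mul_add]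
    push_cast at hbernoulli ⊢
    rw [show t - c * (M + 1) + c = t - c * M by ring] at hbernoulli
    linarith

section LatticePoints

variable {n : ℕ}

-- The box bounds only make the set visibly finite: `mem_latticePoints` drops them.
noncomputable def latticePoints (a : Fin n → ℝ) (y : ℝ) : Finset (Fin n → ℕ) :=
  {ν ∈ Fintype.piFinset fun j => Icc 1 ⌊y / a j⌋₊ | ∑ j, a j * ν j ≤ y}

theorem mem_latticePoints {a : Fin n → ℝ} (ha : ∀ j, 0 < a j) {y : ℝ} {ν : Fin n → ℕ} :
    ν ∈ latticePoints a y ↔ (∀ j, 1 ≤ ν j) ∧ ∑ j, a j * ν j ≤ y := by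
  simp only [latticePoints, mem_filter, Fintype.mem_piFinset, mem_Icc]
  refine ⟨fun h => ⟨fun j => (h.1 j).1, h.2⟩, fun h => ⟨fun j => ⟨h.1 j, ?_⟩, h.2⟩⟩
  have hterm : a j * ν j ≤ ∑ i, a i * ν i :=
    single_le_sum (f := fun i => a i * ν i) (fun i _ => by have := ha i; positivity) (mem_univ j)
  exact Nat.le_floor ((le_div_iff₀ (ha j)).2 (by linarith))

theorem snoc_mem_latticePoints {a : Fin (n + 1) → ℝ} (ha : ∀ j, 0 < a j) {y : ℝ}
    {μ : Fin n → ℕ} {m : ℕ} :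
    Fin.snoc μ m ∈ latticePoints a y ↔
      1 ≤ m ∧ μ ∈ latticePoints (Fin.init a) (y - a (Fin.last n) * m) := by
  rw [mem_latticePoints ha, mem_latticePoints (a := Fin.init a) fun j => ha _,
    Fin.forall_fin_succ', Fin.sum_univ_castSucc]
  simp only [Fin.snoc_castSucc, Fin.snoc_last, Fin.init, le_sub_iff_add_le]
  tauto

theorem card_latticePoints_succ {a : Fin (n + 1) → ℝ} (ha : ∀ j, 0 < a j) (y : ℝ) :
    #(latticePoints a y) = ∑ m ∈ Icc 1 ⌊y / a (Fin.last n)⌋₊,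
      #(latticePoints (Fin.init a) (y - a (Fin.last n) * m)) := by
  refine (card_eq_sum_card_fiberwise (f := fun ν => ν (Fin.last n)) fun ν hν => ?_).trans
    (sum_congr rfl fun m hm => ?_)
  · rw [mem_coe, latticePoints, mem_filter, Fintype.mem_piFinset] at hν
    exact mem_coe.2 (hν.1 _)
  refine card_nbij' Fin.init (fun μ => Fin.snoc μ m) (fun ν hν => ?_) (fun μ hμ => ?_)
    (fun ν hν => ?_) (fun μ _ => Fin.init_snoc _ _)
  · obtain ⟨hmem, rfl⟩ := mem_filter.1 (mem_coe.1 hν)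
    rw [← Fin.snoc_init_self ν, snoc_mem_latticePoints ha] at hmem
    exact hmem.2
  · exact mem_filter.2 ⟨(snoc_mem_latticePoints ha).2 ⟨(mem_Icc.1 hm).1, hμ⟩, Fin.snoc_last _ _⟩
  · obtain ⟨-, rfl⟩ := mem_filter.1 (mem_coe.1 hν)
    exact Fin.snoc_init_self ν

end LatticePoints

theorem card_latticePoints_le : ∀ {n : ℕ} (a : Fin n → ℝ), (∀ j, 0 < a j) → ∀ y : ℝ, 0 ≤ y →
    (#(latticePoints a y) : ℝ) ≤ (y + ∑ j, a j) ^ n / (n ! * ∏ j, a j)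
  | 0, a, _, y, _ => by simpa using card_le_univ (latticePoints a y)
  | n + 1, a, ha, y, hy => by
    set c := a (Fin.last n)
    set M := ⌊y / c⌋₊
    set s := ∑ j, Fin.init a j
    set P := ∏ j, Fin.init a j
    have hc : 0 < c := ha _
    have hs : 0 ≤ s := sum_nonneg fun j _ => (ha _).le
    have hP : 0 < P := prod_pos fun j _ => ha _
    have hcM : c * M ≤ y := by
      rw [mul_comm, ← le_div_iff₀ hc]; exact Nat.floor_le (by positivity)
    have hfiber : ∀ m ∈ Icc 1 M, (#(latticePoints (Fin.init a) (y - c * m)) : ℝ) ≤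
        (y + s - c * m) ^ n / (n ! * P) := by
      intro m hm
      have hcm : c * m ≤ c * M := by gcongr; exact (mem_Icc.1 hm).2
      convert card_latticePoints_le (Fin.init a) (fun j => ha _) (y - c * m) (by linarith)
        using 2
      ring
    have hpowers := mul_sum_Icc_sub_mul_pow_le n hc M (hcM.trans (le_add_of_nonneg_right hs))
    calc (#(latticePoints a y) : ℝ)
        = ∑ m ∈ Icc 1 M, (#(latticePoints (Fin.init a) (y - c * m)) : ℝ) := by
          rw [card_latticePoints_succ ha]; push_cast; rfl
      _ ≤ ∑ m ∈ Icc 1 M, (y + s - c * m) ^ n / (n ! * P) := sum_le_sum hfiber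
      _ = (n + 1) * c * (∑ m ∈ Icc 1 M, (y + s - c * m) ^ n) / ((n + 1) ! * (P * c)) := by
          rw [← sum_div, Nat.factorial_succ]; push_cast; field_simp
      _ ≤ (y + s) ^ (n + 1) / ((n + 1) ! * (P * c)) := by
          gcongr
          exact hpowers.trans (sub_le_self _ (pow_nonneg (by linarith) _))
      _ ≤ (y + (s + c)) ^ (n + 1) / ((n + 1) ! * (P * c)) := by gcongr; linarith
      _ = (y + ∑ j, a j) ^ (n + 1) / ((n + 1) ! * ∏ j, a j) := by
          rw [Fin.sum_univ_castSucc, Fin.prod_univ_castSucc]; rfl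

theorem count_lattice_points_general (k : ℕ) (a : Fin k → ℝ)
    (ha : ∀ j, 0 < a j) (y : ℝ) (hy : 0 ≤ y) :
    (Set.ncard {ν : Fin k → ℕ | (∀ j, 1 ≤ ν j) ∧ ∑ j, a j * (ν j : ℝ) ≤ y} : ℝ)
      ≤ (y + ∑ j, a j) ^ k / (Nat.factorial k * ∏ j, a j) := by
  have hset : {ν : Fin k → ℕ | (∀ j, 1 ≤ ν j) ∧ ∑ j, a j * (ν j : ℝ) ≤ y} =
      latticePoints a y := by
    ext ν; exact (mem_latticePoints ha).symm
  rw [hset, Set.ncard_coe_finset]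
  exact card_latticePoints_le a ha y hy

theorem count_lattice_points (k : ℕ) (hk : 0 < k) (a : Fin k → ℝ)
    (ha : ∀ j, 0 < a j) (y : ℝ) (hy : 0 ≤ y) :
    (Set.ncard {ν : Fin k → ℕ | (∀ j, 1 ≤ ν j) ∧ ∑ j, a j * (ν j : ℝ) ≤ y} : ℝ)
      ≤ (y + ∑ j, a j) ^ k / (Nat.factorial k * ∏ j, a j) :=
  count_lattice_points_general k a ha y hy
end

section
/- Fix a positive integer D and a real number A > D+1. Let f : ℕ → ℂ be a multiplicative function with |Λ_f(n)| ≤ D·Λ(n) for all n ≥ 1 and such that there is a constant C₀ > 0 with |∑_{n ≤ x} f(n)| ≤ C₀·x/(log x)^A for all x ≥ 2. Then for every integer j with 0 ≤ j < A − 1, the series ∑_{n ≥ 1} f(n)·(log n)^j·n^{−s} converges uniformly on every compact subset of the closed half-plane {s ∈ ℂ : Re(s) ≥ 1} (i.e., the partial sums ∑_{n ≤ N} f(n)(log n)^j n^{−s} converge uniformly in s on each such compact set as N → ∞). -/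
open scoped BigOperators
open Finset Filter

noncomputable section

/-- Summability of `1 / (n * (max 1 (log n))^c)` for `c > 1`, via Cauchy condensation. -/
lemma aux_summable {c : ℝ} (hc : 1 < c) :
    Summable (fun n : ℕ => ((n : ℝ) * max 1 (Real.log n) ^ c)⁻¹) := by
  have hc0 : 0 < c := by linarith
  set h : ℕ → ℝ := fun n => ((n : ℝ) * max 1 (Real.log n) ^ c)⁻¹ with hh
  have h_nonneg : ∀ n, 0 ≤ h n := by
    intro n
    apply inv_nonneg.2
    exact mul_nonneg (Nat.cast_nonneg n) (Real.rpow_nonneg (le_trans zero_le_one (le_max_left _ _)) c)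
  have h_mono : ∀ ⦃m n : ℕ⦄, 0 < m → m ≤ n → h n ≤ h m := by
    intro m n hm hmn
    apply inv_anti₀
    · exact mul_pos (by exact_mod_cast hm) (Real.rpow_pos_of_pos (lt_of_lt_of_le zero_lt_one (le_max_left _ _)) c)
    · apply mul_le_mul (by exact_mod_cast hmn)
      · apply Real.rpow_le_rpow (le_trans zero_le_one (le_max_left _ _))
        · exact max_le_max le_rfl (Real.log_le_log (by exact_mod_cast hm) (by exact_mod_cast hmn))
        · exact hc0.le
      · exact Real.rpow_nonneg (le_trans zero_le_one (le_max_left _ _)) c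
      · exact Nat.cast_nonneg n
  rw [← summable_condensed_iff_of_nonneg h_nonneg h_mono]
  have hcond : ∀ k : ℕ, (2:ℝ) ^ k * h (2 ^ k) = (max 1 ((k:ℝ) * Real.log 2) ^ c)⁻¹ := by
    intro k
    have h2k : ((2^k : ℕ) : ℝ) = (2:ℝ)^k := by push_cast; ring
    have hlog : Real.log ((2^k : ℕ) : ℝ) = (k:ℝ) * Real.log 2 := by
      rw [h2k, Real.log_pow]
    simp only [hh, hlog, h2k, mul_inv]
    rw [← mul_assoc, mul_inv_cancel₀ (by positivity), one_mul, Real.log_pow]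
  rw [funext hcond]
  -- compare with ∑ (max 1 k)^(-c)
  have hstep : ∀ k : ℕ, (max 1 ((k:ℝ) * Real.log 2) ^ c)⁻¹
      ≤ (Real.log 2 ^ c)⁻¹ * ((max 1 (k:ℝ)) ^ c)⁻¹ := by
    intro k
    have hl2 : 0 < Real.log 2 := Real.log_pos one_lt_two
    have hkey : Real.log 2 * max 1 (k:ℝ) ≤ max 1 ((k:ℝ) * Real.log 2) := by
      rcases le_total 1 (k:ℝ) with hk | hk
      · rw [max_eq_right hk]
        calc Real.log 2 * (k:ℝ) ≤ (k:ℝ) * Real.log 2 := by ring_nf; exact le_rfl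
          _ ≤ max 1 ((k:ℝ) * Real.log 2) := le_max_right _ _
      · rw [max_eq_left hk]
        calc Real.log 2 * 1 = Real.log 2 := mul_one _
          _ ≤ 1 := le_trans Real.log_two_lt_d9.le (by norm_num)
          _ ≤ max 1 ((k:ℝ) * Real.log 2) := le_max_left _ _
    rw [← mul_inv, ← Real.mul_rpow hl2.le (le_trans zero_le_one (le_max_left _ _))]
    apply inv_anti₀
    · positivity
    · exact Real.rpow_le_rpow (by positivity) hkey hc0.le
  apply Summable.of_nonneg_of_le (fun k => by positivity) hstep
  apply Summable.mul_left
  have h1 : Summable (fun k : ℕ => (((k:ℝ)+1) ^ c)⁻¹) := by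
    have := Real.summable_nat_rpow_inv.2 hc
    have h2 := (summable_nat_add_iff (f := fun n : ℕ => (((n:ℝ)) ^ c)⁻¹) 1).2 this
    convert h2 using 2 with k
    case e'_5 => exact congrArg (fun x : ℝ => (x ^ c)⁻¹) (by push_cast; ring)
    case e'_3 => rfl
  have h2 : Summable (fun k : ℕ => ((max 1 ((k:ℝ)+1)) ^ c)⁻¹) := by
    refine h1.congr fun k => ?_
    rw [max_eq_right (by linarith [(Nat.cast_nonneg k : (0:ℝ) ≤ k)])]
  have h3 := (summable_nat_add_iff (f := fun k : ℕ => ((max 1 (k:ℝ)) ^ c)⁻¹) 1).1 ?_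
  · exact h3
  · refine h2.congr fun k => ?_
    push_cast
    rfl

/-- Summation by parts for sums over `Ioc M N`. -/
lemma abel_aux (a G : ℕ → ℂ) : ∀ M N : ℕ, M < N →
    ∑ n ∈ Ioc M N, a n * G n
      = (∑ k ∈ Icc 1 N, a k) * G N - (∑ k ∈ Icc 1 M, a k) * G (M+1)
        + ∑ n ∈ Ico (M+1) N, (∑ k ∈ Icc 1 n, a k) * (G n - G (n+1)) := by
  intro M N
  induction N with
  | zero => omega
  | succ N ih =>
    intro hMN
    rcases Nat.lt_or_ge M N with hMN' | hMN'
    · have e1 : ∑ n ∈ Ioc M (N+1), a n * G n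
          = ∑ n ∈ Ioc M N, a n * G n + a (N+1) * G (N+1) :=
        Finset.sum_Ioc_succ_top hMN'.le _
      have e2 : ∑ k ∈ Icc 1 (N+1), a k = ∑ k ∈ Icc 1 N, a k + a (N+1) :=
        Finset.sum_Icc_succ_top (by omega) _
      have e3 : ∑ n ∈ Ico (M+1) (N+1), (∑ k ∈ Icc 1 n, a k) * (G n - G (n+1))
          = ∑ n ∈ Ico (M+1) N, (∑ k ∈ Icc 1 n, a k) * (G n - G (n+1))
            + (∑ k ∈ Icc 1 N, a k) * (G N - G (N+1)) :=
        Finset.sum_Ico_succ_top (by omega) _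
      rw [e1, e2, e3, ih hMN']
      ring
    · have hMN'' : M = N := by omega
      subst hMN''
      rw [Nat.Ioc_succ_singleton, Finset.sum_singleton]
      have e2 : ∑ k ∈ Icc 1 (M+1), a k = ∑ k ∈ Icc 1 M, a k + a (M+1) :=
        Finset.sum_Icc_succ_top (by omega) _
      rw [e2, Finset.Ico_self, Finset.sum_empty]
      ring

lemma norm_G_le (s : ℂ) (hs : 1 ≤ s.re) (j n : ℕ) (hn : 1 ≤ n) :
    ‖(Real.log n : ℂ) ^ j * (n : ℂ) ^ (-s)‖ ≤ Real.log n ^ j * ((n : ℝ))⁻¹ := by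
  have hn0 : (0:ℝ) < n := by exact_mod_cast hn
  have hn1 : (1:ℝ) ≤ n := by exact_mod_cast hn
  have hlog0 : 0 ≤ Real.log n := Real.log_nonneg hn1
  rw [norm_mul, norm_pow]
  have h1 : ‖(Real.log n : ℂ)‖ = Real.log n := by
    rw [Complex.norm_real, Real.norm_eq_abs, abs_of_nonneg hlog0]
  have h2 : ‖(n : ℂ) ^ (-s)‖ ≤ ((n:ℝ))⁻¹ := by
    have : (n : ℂ) = ((n : ℝ) : ℂ) := by push_cast; rfl
    rw [this, Complex.norm_cpow_eq_rpow_re_of_pos hn0]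
    calc (n:ℝ) ^ (-s).re ≤ (n:ℝ) ^ (-1 : ℝ) := by
          apply Real.rpow_le_rpow_of_exponent_le hn1
          simp only [Complex.neg_re]; linarith
      _ = ((n:ℝ))⁻¹ := Real.rpow_neg_one _
  rw [h1]
  exact mul_le_mul_of_nonneg_left h2 (by positivity) |>.trans_eq rfl

lemma norm_G_sub_le (s : ℂ) (hs : 1 ≤ s.re) (j n : ℕ) (hn : 3 ≤ n) :
    ‖(Real.log n : ℂ) ^ j * (n : ℂ) ^ (-s)
        - (Real.log (n+1 : ℕ) : ℂ) ^ j * ((n+1 : ℕ) : ℂ) ^ (-s)‖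
      ≤ ((j:ℝ) + ‖s‖) * Real.log ((n:ℝ)+1) ^ j * (((n:ℝ))^2)⁻¹ := by
  have hn3 : (3:ℝ) ≤ (n:ℝ) := by exact_mod_cast hn
  set Ψ : ℝ → ℂ := fun t => (Real.log t : ℂ) ^ j * Complex.exp (-s * Real.log t) with hΨ
  -- the function agrees with the terms at natural arguments
  have hagree : ∀ m : ℕ, 1 ≤ m → (Real.log m : ℂ) ^ j * (m : ℂ) ^ (-s) = Ψ m := by
    intro m hm
    have hm0 : (0:ℝ) < m := by exact_mod_cast hm
    have : (m : ℂ) ^ (-s) = Complex.exp (-s * Real.log m) := by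
      rw [Complex.cpow_def_of_ne_zero (by exact_mod_cast hm0.ne' : (m:ℂ) ≠ 0)]
      congr 1
      have : ((m:ℕ) : ℂ) = ((m : ℝ) : ℂ) := by push_cast; rfl
      rw [this, ← Complex.ofReal_log hm0.le]
      ring
    rw [this]
  -- derivative bound on [n, n+1]
  set C : ℝ := ((j:ℝ) + ‖s‖) * Real.log ((n:ℝ)+1) ^ j * (((n:ℝ))^2)⁻¹ with hC
  have hderiv : ∀ t ∈ Set.Icc (n:ℝ) ((n:ℝ)+1),
      HasDerivWithinAt Ψ
        ((j:ℕ) * (Real.log t : ℂ) ^ (j-1) * (t⁻¹ : ℝ) * Complex.exp (-s * Real.log t)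
          + (Real.log t : ℂ) ^ j * (Complex.exp (-s * Real.log t) * (-s * (t⁻¹ : ℝ))))
        (Set.Icc (n:ℝ) ((n:ℝ)+1)) t := by
    intro t ht
    have ht0 : (0:ℝ) < t := by linarith [ht.1]
    have hlog : HasDerivAt Real.log t⁻¹ t := Real.hasDerivAt_log ht0.ne'
    have hlogC : HasDerivAt (fun t : ℝ => (Real.log t : ℂ)) ((t⁻¹ : ℝ) : ℂ) t :=
      hlog.ofReal_comp
    have hpow : HasDerivAt (fun t : ℝ => (Real.log t : ℂ) ^ j)
        ((j:ℕ) * (Real.log t : ℂ) ^ (j-1) * (t⁻¹ : ℝ)) t := by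
      have := (hasDerivAt_pow j ((Real.log t : ℂ))).comp t hlogC
      simpa [Function.comp_def, mul_assoc] using this
    have hinner : HasDerivAt (fun t : ℝ => -s * (Real.log t : ℂ)) (-s * (t⁻¹ : ℝ)) t :=
      hlogC.const_mul (-s)
    have hexp : HasDerivAt (fun t : ℝ => Complex.exp (-s * Real.log t))
        (Complex.exp (-s * Real.log t) * (-s * (t⁻¹ : ℝ))) t := hinner.cexp
    exact (hpow.mul hexp).hasDerivWithinAt
  have hbound : ∀ t ∈ Set.Icc (n:ℝ) ((n:ℝ)+1),
      ‖(j:ℕ) * (Real.log t : ℂ) ^ (j-1) * (t⁻¹ : ℝ) * Complex.exp (-s * Real.log t)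
        + (Real.log t : ℂ) ^ j * (Complex.exp (-s * Real.log t) * (-s * (t⁻¹ : ℝ)))‖ ≤ C := by
    intro t ht
    have ht3 : (3:ℝ) ≤ t := le_trans hn3 ht.1
    have ht0 : (0:ℝ) < t := by linarith
    have htn : (n:ℝ) ≤ t := ht.1
    have hlog1 : 1 ≤ Real.log t := by
      rw [Real.le_log_iff_exp_le ht0]
      exact le_trans Real.exp_one_lt_d9.le (by linarith)
    have hlogt0 : 0 ≤ Real.log t := by linarith
    have hnormlog : ‖(Real.log t : ℂ)‖ = Real.log t := by
      rw [Complex.norm_real, Real.norm_eq_abs, abs_of_nonneg hlogt0]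
    have hexp_norm : ‖Complex.exp (-s * Real.log t)‖ ≤ t⁻¹ := by
      rw [Complex.norm_exp]
      have hre : (-s * (Real.log t : ℂ)).re = -s.re * Real.log t := by
        simp [Complex.mul_re]
      rw [hre]
      have : -s.re * Real.log t ≤ -Real.log t := by nlinarith
      calc Real.exp (-s.re * Real.log t) ≤ Real.exp (-Real.log t) := Real.exp_le_exp.2 this
        _ = (Real.exp (Real.log t))⁻¹ := by rw [Real.exp_neg]
        _ = t⁻¹ := by rw [Real.exp_log ht0]
    have hlog_le : Real.log t ≤ Real.log ((n:ℝ)+1) := Real.log_le_log ht0 (by linarith [ht.2])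
    have hlogn1 : 0 ≤ Real.log ((n:ℝ)+1) := le_trans (by linarith) hlog_le
    have hpowj : Real.log t ^ j ≤ Real.log ((n:ℝ)+1) ^ j := pow_le_pow_left₀ hlogt0 hlog_le j
    have hpowj1 : Real.log t ^ (j-1) ≤ Real.log t ^ j := pow_le_pow_right₀ hlog1 (Nat.sub_le j 1)
    have htinv : t⁻¹ ≤ ((n:ℝ))⁻¹ := by
      apply inv_anti₀ (by linarith) htn
    have hn0 : (0:ℝ) < n := by linarith
    calc ‖(j:ℕ) * (Real.log t : ℂ) ^ (j-1) * (t⁻¹ : ℝ) * Complex.exp (-s * Real.log t)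
        + (Real.log t : ℂ) ^ j * (Complex.exp (-s * Real.log t) * (-s * (t⁻¹ : ℝ)))‖
        ≤ ‖(j:ℕ) * (Real.log t : ℂ) ^ (j-1) * (t⁻¹ : ℝ) * Complex.exp (-s * Real.log t)‖
          + ‖(Real.log t : ℂ) ^ j * (Complex.exp (-s * Real.log t) * (-s * (t⁻¹ : ℝ)))‖ :=
          norm_add_le _ _
      _ ≤ (j:ℝ) * Real.log t ^ j * t⁻¹ * t⁻¹ + Real.log t ^ j * (t⁻¹ * (‖s‖ * t⁻¹)) := by
          have e2 : ‖((t⁻¹ : ℝ) : ℂ)‖ = t⁻¹ := by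
            rw [Complex.norm_real, Real.norm_eq_abs, abs_of_nonneg (by positivity)]
          have hb1 : ‖(j:ℕ) * (Real.log t : ℂ) ^ (j-1) * (t⁻¹ : ℝ) * Complex.exp (-s * Real.log t)‖
              ≤ (j:ℝ) * Real.log t ^ j * t⁻¹ * t⁻¹ := by
            rw [norm_mul, norm_mul, norm_mul, norm_pow, hnormlog, Complex.norm_natCast, e2]
            gcongr
          have hb2 : ‖(Real.log t : ℂ) ^ j * (Complex.exp (-s * Real.log t) * (-s * (t⁻¹ : ℝ)))‖
              ≤ Real.log t ^ j * (t⁻¹ * (‖s‖ * t⁻¹)) := by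
            rw [norm_mul, norm_mul, norm_pow, hnormlog, norm_mul, norm_neg, e2]
            gcongr
          exact add_le_add hb1 hb2
      _ = ((j:ℝ) + ‖s‖) * Real.log t ^ j * (t⁻¹ * t⁻¹) := by ring
      _ ≤ ((j:ℝ) + ‖s‖) * Real.log ((n:ℝ)+1) ^ j * (((n:ℝ))⁻¹ * ((n:ℝ))⁻¹) := by
          gcongr
      _ = C := by rw [hC]; rw [sq]; rw [mul_inv]
  -- MVT
  have hmvt := (convex_Icc (n:ℝ) ((n:ℝ)+1)).norm_image_sub_le_of_norm_hasDerivWithin_le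
    hderiv hbound (Set.left_mem_Icc.2 (by linarith)) (Set.right_mem_Icc.2 (by linarith))
  have hdist : ‖Ψ ((n:ℝ)+1) - Ψ (n:ℝ)‖ ≤ C * 1 := by
    calc ‖Ψ ((n:ℝ)+1) - Ψ (n:ℝ)‖ ≤ C * ‖((n:ℝ)+1) - (n:ℝ)‖ := hmvt
      _ = C * 1 := by norm_num
  rw [hagree n (by omega), hagree (n+1) (by omega)]
  have hcast : ((n+1 : ℕ) : ℝ) = (n:ℝ)+1 := by push_cast; ring
  rw [norm_sub_rev]
  calc ‖Ψ ((n+1:ℕ):ℝ) - Ψ (n:ℝ)‖ = ‖Ψ ((n:ℝ)+1) - Ψ (n:ℝ)‖ := by rw [hcast]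
    _ ≤ C * 1 := hdist
    _ = C := mul_one C

section AuxArith

lemma arith1 {x y : ℝ} (hx : 0 < x) (hy : 0 < y) (C₀ : ℝ) (j : ℕ) {A c : ℝ}
    (hAc : A = c + j) : (C₀ * x / y ^ A) * (y ^ j * x⁻¹) = C₀ * (y ^ c)⁻¹ := by
  have hyA : y ^ A = y ^ c * y ^ (j:ℝ) := by
    rw [hAc, Real.rpow_add hy]
  rw [hyA, ← Real.rpow_natCast y j] at *
  have h1 : (0:ℝ) < y ^ c := Real.rpow_pos_of_pos hy c
  have h2 : (0:ℝ) < y ^ (j:ℝ) := Real.rpow_pos_of_pos hy _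
  field_simp

lemma arith2 {x y : ℝ} (hx : 0 < x) (hy : 0 < y) (C₀ K₁ : ℝ) (j : ℕ) {A c : ℝ}
    (hAc : A = c + j) :
    (C₀ * x / y ^ A) * (K₁ * (y ^ j * (x^2)⁻¹)) = C₀ * K₁ * (x * y ^ c)⁻¹ := by
  have hyA : y ^ A = y ^ c * y ^ (j:ℝ) := by
    rw [hAc, Real.rpow_add hy]
  rw [hyA, ← Real.rpow_natCast y j] at *
  have h1 : (0:ℝ) < y ^ c := Real.rpow_pos_of_pos hy c
  have h2 : (0:ℝ) < y ^ (j:ℝ) := Real.rpow_pos_of_pos hy _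
  field_simp

lemma log_one_le {n : ℕ} (hn : 3 ≤ n) : 1 ≤ Real.log n := by
  have hn3 : (3:ℝ) ≤ (n:ℝ) := by exact_mod_cast hn
  rw [Real.le_log_iff_exp_le (by linarith)]
  exact le_trans Real.exp_one_lt_d9.le (by linarith)

lemma log_succ_le {n : ℕ} (hn : 2 ≤ n) : Real.log ((n:ℝ)+1) ≤ 2 * Real.log n := by
  have hn2 : (2:ℝ) ≤ (n:ℝ) := by exact_mod_cast hn
  have h1 : Real.log ((n:ℝ)+1) ≤ Real.log ((n:ℝ)^2) :=
    Real.log_le_log (by linarith) (by nlinarith)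
  rwa [Real.log_pow, Nat.cast_ofNat] at h1

end AuxArith

private theorem uniform_convergence_core (A : ℝ) (f : ℕ → ℂ)
    (C₀ : ℝ) (hC₀ : 0 < C₀)
    (hsum : ∀ x : ℝ, 2 ≤ x →
      ‖∑ n ∈ Finset.Icc 1 ⌊x⌋₊, f n‖ ≤ C₀ * x / Real.log x ^ A) :
    ∀ j : ℕ, (j : ℝ) < A - 1 →
      ∀ K : Set ℂ, IsCompact K → K ⊆ {s : ℂ | 1 ≤ s.re} →
        ∃ L : ℂ → ℂ, TendstoUniformlyOn
          (fun (N : ℕ) (s : ℂ) =>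
            ∑ n ∈ Finset.Icc 1 N, f n * (Real.log n : ℂ) ^ j * (n : ℂ) ^ (-s))
          L Filter.atTop K := by
  intro j hj K hK hKsub
  set c : ℝ := A - (j:ℝ) with hcdef
  have hc : 1 < c := by rw [hcdef]; linarith
  have hc0 : 0 < c := by linarith
  have hAc : A = c + j := by rw [hcdef]; ring
  obtain ⟨B₀, hB₀⟩ := hK.isBounded.exists_norm_le
  set B : ℝ := max B₀ 0 with hBdef
  have hB : ∀ s ∈ K, ‖s‖ ≤ B := fun s hs => le_trans (hB₀ s hs) (le_max_left _ _)
  have hB0 : (0:ℝ) ≤ B := le_max_right _ _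
  set h : ℕ → ℝ := fun n => ((n : ℝ) * max 1 (Real.log n) ^ c)⁻¹ with hhdef
  have hsummable : Summable h := aux_summable hc
  have h_nonneg : ∀ n, 0 ≤ h n := by
    intro n
    apply inv_nonneg.2
    exact mul_nonneg (Nat.cast_nonneg n)
      (Real.rpow_nonneg (le_trans zero_le_one (le_max_left _ _)) c)
  set T : ℝ := ∑' n, h n with hTdef
  set C₂ : ℝ := C₀ * ((j:ℝ) + B) * 2^j with hC₂def
  have hC₂0 : 0 ≤ C₂ := by positivity
  set P : ℕ → ℂ → ℂ := fun N s =>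
    ∑ n ∈ Finset.Icc 1 N, f n * (Real.log n : ℂ) ^ j * (n : ℂ) ^ (-s) with hPdef
  set E : ℕ → ℝ := fun M => C₀ * (Real.log M ^ c)⁻¹ + C₀ * 2^j * (Real.log M ^ c)⁻¹
    + C₂ * (T - ∑ n ∈ range (M+1), h n) with hEdef
  -- E tends to 0
  have hE0 : Filter.Tendsto E atTop (nhds 0) := by
    have hlogtop : Filter.Tendsto (fun M : ℕ => Real.log M) atTop atTop :=
      Real.tendsto_log_atTop.comp tendsto_natCast_atTop_atTop
    have h1 : Filter.Tendsto (fun M : ℕ => (Real.log M ^ c)⁻¹) atTop (nhds 0) :=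
      ((tendsto_rpow_atTop hc0).comp hlogtop).inv_tendsto_atTop
    have h2 : Filter.Tendsto (fun M : ℕ => ∑ n ∈ range (M+1), h n) atTop (nhds T) :=
      hsummable.hasSum.tendsto_sum_nat.comp (tendsto_add_atTop_nat 1)
    have h3 : Filter.Tendsto (fun M : ℕ => T - ∑ n ∈ range (M+1), h n) atTop (nhds 0) := by
      simpa using (tendsto_const_nhds (x := T)).sub h2
    have := ((h1.const_mul C₀).add (h1.const_mul (C₀ * 2^j))).add (h3.const_mul C₂)
    simpa using this
  -- partial sum bound at integers
  have hS : ∀ n : ℕ, 2 ≤ n → ‖∑ k ∈ Icc 1 n, f k‖ ≤ C₀ * n / Real.log n ^ A := by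
    intro n hn
    have := hsum n (by exact_mod_cast hn)
    rwa [Nat.floor_natCast] at this
  have hSnonneg : ∀ n : ℕ, 3 ≤ n → (0:ℝ) ≤ C₀ * n / Real.log n ^ A := by
    intro n hn
    have h1 : (1:ℝ) ≤ Real.log n := log_one_le hn
    positivity
  -- the key tail estimate
  have key : ∀ M N : ℕ, 3 ≤ M → M < N → ∀ s ∈ K, ‖P N s - P M s‖ ≤ E M := by
    intro M N hM3 hMN s hs
    have hs1 : 1 ≤ s.re := hKsub hs
    have hsB : ‖s‖ ≤ B := hB s hs
    set G : ℕ → ℂ := fun n => (Real.log n : ℂ) ^ j * (n : ℂ) ^ (-s) with hGdef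
    have hsplit : P N s - P M s = ∑ n ∈ Ioc M N, f n * G n := by
      have hIccIoc : ∀ k : ℕ, Finset.Icc 1 k = Finset.Ioc 0 k := by
        intro k; ext x; simp; omega
      simp only [hPdef, hGdef, mul_assoc, hIccIoc]
      rw [eq_comm, eq_sub_iff_add_eq, add_comm]
      exact Finset.sum_Ioc_consecutive _ (Nat.zero_le M) hMN.le
    have habel := abel_aux f G M N hMN
    -- basic facts
    have hM0 : (0:ℝ) < (M:ℝ) := by exact_mod_cast (by omega : 0 < M)
    have hN0 : (0:ℝ) < (N:ℝ) := by exact_mod_cast (by omega : 0 < N)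
    have hlogM1 : 1 ≤ Real.log M := log_one_le hM3
    have hlogM0 : 0 < Real.log M := by linarith
    have hlogN1 : 1 ≤ Real.log N := log_one_le (by omega)
    have hlogN0 : 0 < Real.log N := by linarith
    -- term 1 : ‖S N * G N‖
    have ht1 : ‖(∑ k ∈ Icc 1 N, f k) * G N‖ ≤ C₀ * (Real.log M ^ c)⁻¹ := by
      rw [norm_mul]
      calc ‖∑ k ∈ Icc 1 N, f k‖ * ‖G N‖
          ≤ (C₀ * N / Real.log N ^ A) * (Real.log N ^ j * ((N:ℝ))⁻¹) := by
            apply mul_le_mul (hS N (by omega)) (norm_G_le s hs1 j N (by omega))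
              (norm_nonneg _) (hSnonneg N (by omega))
        _ = C₀ * (Real.log N ^ c)⁻¹ := arith1 hN0 hlogN0 C₀ j hAc
        _ ≤ C₀ * (Real.log M ^ c)⁻¹ := by
            apply mul_le_mul_of_nonneg_left _ hC₀.le
            apply inv_anti₀ (Real.rpow_pos_of_pos hlogM0 c)
            apply Real.rpow_le_rpow hlogM0.le
              (Real.log_le_log hM0 (by exact_mod_cast hMN.le)) hc0.le
    -- term 2 : ‖S M * G (M+1)‖
    have ht2 : ‖(∑ k ∈ Icc 1 M, f k) * G (M+1)‖ ≤ C₀ * 2^j * (Real.log M ^ c)⁻¹ := by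
      rw [norm_mul]
      have hGM1 : ‖G (M+1)‖ ≤ 2^j * (Real.log M ^ j * ((M:ℝ))⁻¹) := by
        calc ‖G (M+1)‖ ≤ Real.log (M+1 : ℕ) ^ j * (((M+1 : ℕ):ℝ))⁻¹ :=
              norm_G_le s hs1 j (M+1) (by omega)
          _ ≤ (2 * Real.log M) ^ j * ((M:ℝ))⁻¹ := by
              apply mul_le_mul
              · apply pow_le_pow_left₀ (Real.log_nonneg (by exact_mod_cast (by omega : 1 ≤ M+1)))
                have : ((M+1 : ℕ):ℝ) = (M:ℝ)+1 := by push_cast; ring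
                rw [this]
                exact log_succ_le (by omega)
              · apply inv_anti₀ hM0; push_cast; linarith
              · positivity
              · positivity
          _ = 2^j * (Real.log M ^ j * ((M:ℝ))⁻¹) := by rw [mul_pow]; ring
      calc ‖∑ k ∈ Icc 1 M, f k‖ * ‖G (M+1)‖
          ≤ (C₀ * M / Real.log M ^ A) * (2^j * (Real.log M ^ j * ((M:ℝ))⁻¹)) := by
            apply mul_le_mul (hS M (by omega)) hGM1 (norm_nonneg _) (hSnonneg M hM3)
        _ = 2^j * ((C₀ * M / Real.log M ^ A) * (Real.log M ^ j * ((M:ℝ))⁻¹)) := by ring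
        _ = 2^j * (C₀ * (Real.log M ^ c)⁻¹) := by rw [arith1 hM0 hlogM0 C₀ j hAc]
        _ = C₀ * 2^j * (Real.log M ^ c)⁻¹ := by ring
    -- term 3 : middle sum
    have ht3 : ‖∑ n ∈ Ico (M+1) N, (∑ k ∈ Icc 1 n, f k) * (G n - G (n+1))‖
        ≤ C₂ * (T - ∑ n ∈ range (M+1), h n) := by
      have hterm : ∀ n ∈ Ico (M+1) N, ‖(∑ k ∈ Icc 1 n, f k) * (G n - G (n+1))‖ ≤ C₂ * h n := by
        intro n hn
        rw [Finset.mem_Ico] at hn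
        have hn3 : 3 ≤ n := by omega
        have hn0 : (0:ℝ) < (n:ℝ) := by exact_mod_cast (by omega : 0 < n)
        have hlogn1 : 1 ≤ Real.log n := log_one_le hn3
        have hlogn0 : 0 < Real.log n := by linarith
        have hGd : ‖G n - G (n+1)‖
            ≤ ((j:ℝ) + B) * (2^j * (Real.log n ^ j * (((n:ℝ))^2)⁻¹)) := by
          calc ‖G n - G (n+1)‖
              ≤ ((j:ℝ) + ‖s‖) * Real.log ((n:ℝ)+1) ^ j * (((n:ℝ))^2)⁻¹ :=
                norm_G_sub_le s hs1 j n hn3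
            _ ≤ ((j:ℝ) + B) * (2 * Real.log n) ^ j * (((n:ℝ))^2)⁻¹ := by
                apply mul_le_mul_of_nonneg_right _ (by positivity)
                apply mul_le_mul (by linarith)
                  (pow_le_pow_left₀ (Real.log_nonneg (by linarith)) (log_succ_le (by omega)) j)
                  (pow_nonneg (Real.log_nonneg (by linarith)) j) (by positivity)
            _ = ((j:ℝ) + B) * (2^j * (Real.log n ^ j * (((n:ℝ))^2)⁻¹)) := by
                rw [mul_pow]; ring
        have hhn : h n = ((n:ℝ) * Real.log n ^ c)⁻¹ := by
          rw [hhdef]; simp only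
          rw [max_eq_right hlogn1]
        calc ‖(∑ k ∈ Icc 1 n, f k) * (G n - G (n+1))‖
            = ‖∑ k ∈ Icc 1 n, f k‖ * ‖G n - G (n+1)‖ := norm_mul _ _
          _ ≤ (C₀ * n / Real.log n ^ A)
              * (((j:ℝ) + B) * (2^j * (Real.log n ^ j * (((n:ℝ))^2)⁻¹))) := by
              apply mul_le_mul (hS n (by omega)) hGd (norm_nonneg _) (hSnonneg n hn3)
          _ = (C₀ * n / Real.log n ^ A)
              * (((j:ℝ) + B) * 2^j * (Real.log n ^ j * (((n:ℝ))^2)⁻¹)) := by ring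
          _ = C₀ * (((j:ℝ) + B) * 2^j) * ((n:ℝ) * Real.log n ^ c)⁻¹ :=
              arith2 hn0 hlogn0 C₀ (((j:ℝ) + B) * 2^j) j hAc
          _ = C₂ * h n := by rw [hhn, hC₂def]; ring
      calc ‖∑ n ∈ Ico (M+1) N, (∑ k ∈ Icc 1 n, f k) * (G n - G (n+1))‖
          ≤ ∑ n ∈ Ico (M+1) N, ‖(∑ k ∈ Icc 1 n, f k) * (G n - G (n+1))‖ :=
            norm_sum_le _ _
        _ ≤ ∑ n ∈ Ico (M+1) N, C₂ * h n := Finset.sum_le_sum hterm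
        _ = C₂ * ∑ n ∈ Ico (M+1) N, h n := by rw [Finset.mul_sum]
        _ ≤ C₂ * (T - ∑ n ∈ range (M+1), h n) := by
            apply mul_le_mul_of_nonneg_left _ hC₂0
            have heq : ∑ n ∈ range (M+1), h n + ∑ n ∈ Ico (M+1) N, h n
                = ∑ n ∈ range N, h n := by
              rw [Finset.range_eq_Ico, Finset.range_eq_Ico]
              exact Finset.sum_Ico_consecutive h (Nat.zero_le (M+1)) (by omega)
            have hle : ∑ n ∈ range N, h n ≤ T :=
              hsummable.sum_le_tsum (range N) (fun i _ => h_nonneg i)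
            linarith
    -- combine
    rw [hsplit, habel]
    calc ‖(∑ k ∈ Icc 1 N, f k) * G N - (∑ k ∈ Icc 1 M, f k) * G (M+1)
          + ∑ n ∈ Ico (M+1) N, (∑ k ∈ Icc 1 n, f k) * (G n - G (n+1))‖
        ≤ ‖(∑ k ∈ Icc 1 N, f k) * G N - (∑ k ∈ Icc 1 M, f k) * G (M+1)‖
          + ‖∑ n ∈ Ico (M+1) N, (∑ k ∈ Icc 1 n, f k) * (G n - G (n+1))‖ := norm_add_le _ _
      _ ≤ (‖(∑ k ∈ Icc 1 N, f k) * G N‖ + ‖(∑ k ∈ Icc 1 M, f k) * G (M+1)‖)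
          + ‖∑ n ∈ Ico (M+1) N, (∑ k ∈ Icc 1 n, f k) * (G n - G (n+1))‖ := by
          apply add_le_add_left (norm_sub_le _ _)
      _ ≤ (C₀ * (Real.log M ^ c)⁻¹ + C₀ * 2^j * (Real.log M ^ c)⁻¹)
          + C₂ * (T - ∑ n ∈ range (M+1), h n) := by
          apply add_le_add (add_le_add ht1 ht2) ht3
      _ = E M := by rw [hEdef]
  -- uniform Cauchy
  have hUC : UniformCauchySeqOn P atTop K := by
    rw [Metric.uniformCauchySeqOn_iff]
    intro ε hε
    obtain ⟨M₀, hM₀⟩ := (hE0.eventually (gt_mem_nhds hε)).exists_forall_of_atTop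
    refine ⟨max M₀ 3, fun m hm n hn x hx => ?_⟩
    have hm3 : 3 ≤ m := le_trans (le_max_right _ _) hm
    have hn3 : 3 ≤ n := le_trans (le_max_right _ _) hn
    have hmM₀ : M₀ ≤ m := le_trans (le_max_left _ _) hm
    have hnM₀ : M₀ ≤ n := le_trans (le_max_left _ _) hn
    rcases lt_trichotomy m n with hlt | heq | hgt
    · rw [dist_comm, dist_eq_norm]
      exact lt_of_le_of_lt (key m n hm3 hlt x hx) (hM₀ m hmM₀)
    · rw [heq]; simpa using hε
    · rw [dist_eq_norm]
      exact lt_of_le_of_lt (key n m hn3 hgt x hx) (hM₀ n hnM₀)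
  -- conclude
  refine ⟨fun x => limUnder atTop (fun N => P N x), ?_⟩
  exact hUC.tendstoUniformlyOn_of_tendsto
    (fun x hx => (hUC.cauchySeq hx).tendsto_limUnder)

theorem uniform_convergence_of_derivatives (D : ℕ) (hD : 0 < D) (A : ℝ) (hA : A > D + 1)
    (f Λf : ℕ → ℂ) (hf : IsMultiplicativeFn f) (hΛf : IsLambdaOf Λf f)
    (hΛbd : ∀ n : ℕ, 1 ≤ n → ‖Λf n‖ ≤ D * ArithmeticFunction.vonMangoldt n)
    (C₀ : ℝ) (hC₀ : 0 < C₀)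
    (hsum : ∀ x : ℝ, 2 ≤ x →
      ‖∑ n ∈ Finset.Icc 1 ⌊x⌋₊, f n‖ ≤ C₀ * x / Real.log x ^ A) :
    ∀ j : ℕ, (j : ℝ) < A - 1 →
      ∀ K : Set ℂ, IsCompact K → K ⊆ {s : ℂ | 1 ≤ s.re} →
        ∃ L : ℂ → ℂ, TendstoUniformlyOn
          (fun (N : ℕ) (s : ℂ) =>
            ∑ n ∈ Finset.Icc 1 N, f n * (Real.log n : ℂ) ^ j * (n : ℂ) ^ (-s))
          L Filter.atTop K :=
  uniform_convergence_core A f C₀ hC₀ hsum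
end
end

section
/- Let (a_n)_{n ≥ 1} be complex numbers and (b_n)_{n ≥ 1} nonnegative reals with |a_n| ≤ b_n for all n, and suppose that ∑_{n ≥ 1} b_n·n^{−σ} < ∞ for every σ > 1. Write A(s) = ∑_{n ≥ 1} a_n·n^{−s} and B(s) = ∑_{n ≥ 1} b_n·n^{−s} for Re(s) > 1. Then for every σ > 1 and every T ≥ 0, ∫_{−T}^{T} |A(σ+it)|² dt ≤ 3·∫_{−T}^{T} |B(σ+it)|² dt. -/
open scoped BigOperators
open Finset

noncomputable section

namespace MontAux

open MeasureTheory Complex intervalIntegral Set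

/-- The cosine transform of the triangle kernel. -/
def tentK (T x : ℝ) : ℝ := ∫ s in (-T)..T, (1 - |s|/T) * Real.cos (s*x)

lemma contTent (T : ℝ) : Continuous fun s : ℝ => 1 - |s|/T :=
  continuous_const.sub (continuous_id.abs.div_const T)

lemma contTentC (T x : ℝ) : Continuous fun s : ℝ => (1 - |s|/T) * Real.cos (s*x) :=
  (contTent T).mul (Real.continuous_cos.comp (continuous_id.mul continuous_const))

lemma contTentS (T x : ℝ) : Continuous fun s : ℝ => (1 - |s|/T) * Real.sin (s*x) :=
  (contTent T).mul (Real.continuous_sin.comp (continuous_id.mul continuous_const))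

lemma contE (c d : ℝ) :
    Continuous fun s : ℝ => Complex.exp (((-((s + c) * d) : ℝ) : ℂ) * Complex.I) :=
  Complex.continuous_exp.comp
    ((Complex.continuous_ofReal.comp (by fun_prop)).mul continuous_const)

lemma contE2 (d : ℝ) :
    Continuous fun t : ℝ => Complex.exp (((-(t * d) : ℝ) : ℂ) * Complex.I) :=
  Complex.continuous_exp.comp
    ((Complex.continuous_ofReal.comp (by fun_prop)).mul continuous_const)

lemma int_even {h : ℝ → ℝ} (hc : Continuous h) (he : ∀ s, h (-s) = h s) (T : ℝ) :
    (∫ s in (-T)..T, h s) = 2 * ∫ s in (0:ℝ)..T, h s := by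
  have h1 : (∫ s in (0:ℝ)..T, h (-s)) = ∫ s in (-T)..(0:ℝ), h s := by
    simpa using intervalIntegral.integral_comp_neg (a := (0:ℝ)) (b := T) h
  have h2 : (∫ s in (0:ℝ)..T, h (-s)) = ∫ s in (0:ℝ)..T, h s := by
    simp only [he]
  have h3 := intervalIntegral.integral_add_adjacent_intervals
    (a := -T) (b := 0) (c := T) (μ := volume)
    (hc.intervalIntegrable _ _) (hc.intervalIntegrable _ _)
  rw [← h3, ← h1, h2]; ring

lemma int_odd {h : ℝ → ℝ} (hc : Continuous h) (ho : ∀ s, h (-s) = - h s) (T : ℝ) :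
    (∫ s in (-T)..T, h s) = 0 := by
  have h1 : (∫ s in (0:ℝ)..T, h (-s)) = ∫ s in (-T)..(0:ℝ), h s := by
    simpa using intervalIntegral.integral_comp_neg (a := (0:ℝ)) (b := T) h
  have h2 : (∫ s in (0:ℝ)..T, h (-s)) = - ∫ s in (0:ℝ)..T, h s := by
    simp only [ho]
    exact intervalIntegral.integral_neg
  have h3 := intervalIntegral.integral_add_adjacent_intervals
    (a := -T) (b := 0) (c := T) (μ := volume)
    (hc.intervalIntegrable _ _) (hc.intervalIntegrable _ _)
  rw [← h3, ← h1, h2]; ring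

lemma ftc (T x : ℝ) (hT : T ≠ 0) (hx : x ≠ 0) :
    (∫ s in (0:ℝ)..T, (1 - s/T) * Real.cos (s*x)) = (1 - Real.cos (T*x))/(T*x^2) := by
  have hderiv : ∀ s ∈ uIcc (0:ℝ) T,
      HasDerivAt (fun u => (1 - u/T) * Real.sin (u*x)/x - Real.cos (u*x)/(T*x^2))
        ((1 - s/T) * Real.cos (s*x)) s := by
    intro s _
    have h1 : HasDerivAt (fun u : ℝ => 1 - u/T) (-(1/T)) s := by
      simpa using ((hasDerivAt_id s).div_const T).const_sub 1
    have h2 : HasDerivAt (fun u : ℝ => Real.sin (u*x)) (Real.cos (s*x) * x) s := by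
      simpa [Function.comp_def] using (Real.hasDerivAt_sin (s*x)).comp s ((hasDerivAt_id s).mul_const x)
    have h3 : HasDerivAt (fun u : ℝ => Real.cos (u*x)) (-Real.sin (s*x) * x) s := by
      simpa [Function.comp_def] using (Real.hasDerivAt_cos (s*x)).comp s ((hasDerivAt_id s).mul_const x)
    have h4 := ((h1.mul h2).div_const x).sub (h3.div_const (T*x^2))
    refine h4.congr_deriv ?_
    field_simp
    ring
  rw [intervalIntegral.integral_eq_sub_of_hasDerivAt hderiv
      (((continuous_const.sub (continuous_id.div_const T)).mul
        (Real.continuous_cos.comp (continuous_id.mul continuous_const))).intervalIntegrable _ _)]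
  have hTT : T/T = 1 := div_self hT
  simp only [zero_mul, Real.sin_zero, Real.cos_zero, zero_div, mul_zero]
  rw [hTT]
  field_simp
  ring

lemma tentK_nonneg {T : ℝ} (hT : 0 < T) (x : ℝ) : 0 ≤ tentK T x := by
  have hcont : Continuous fun s : ℝ => (1 - |s|/T) * Real.cos (s*x) := contTentC T x
  have he : ∀ s : ℝ, (1 - |(-s)|/T) * Real.cos ((-s)*x) = (1 - |s|/T) * Real.cos (s*x) := by
    intro s
    rw [abs_neg, show (-s)*x = -(s*x) by ring, Real.cos_neg]
  have h2 : tentK T x = 2 * ∫ s in (0:ℝ)..T, (1 - |s|/T) * Real.cos (s*x) :=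
    int_even hcont he T
  have h3 : (∫ s in (0:ℝ)..T, (1 - |s|/T) * Real.cos (s*x))
      = ∫ s in (0:ℝ)..T, (1 - s/T) * Real.cos (s*x) := by
    apply intervalIntegral.integral_congr
    intro s hs
    rw [uIcc_of_le hT.le] at hs
    simp only [_root_.abs_of_nonneg hs.1]
  rw [h2, h3]
  rcases eq_or_ne x 0 with hx | hx
  · subst hx
    have h4 : (∫ s in (0:ℝ)..T, (1 - s/T) * Real.cos (s*0)) = ∫ s in (0:ℝ)..T, (1 - s/T) := by
      apply intervalIntegral.integral_congr
      intro s _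
      simp
    rw [h4]
    have h5 : 0 ≤ ∫ s in (0:ℝ)..T, 1 - s/T := by
      apply intervalIntegral.integral_nonneg hT.le
      intro u hu
      have : u/T ≤ 1 := by rw [div_le_one hT]; exact hu.2
      linarith
    linarith
  · rw [ftc T x hT.ne' hx]
    have h5 : Real.cos (T*x) ≤ 1 := Real.cos_le_one _
    have h6 : (0:ℝ) < T * x^2 := by positivity
    have h7 : 0 ≤ (1 - Real.cos (T*x))/(T*x^2) := div_nonneg (by linarith) h6.le
    linarith

lemma tentK_abs_le {T : ℝ} (hT : 0 < T) (x : ℝ) : |tentK T x| ≤ 2*T := by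
  have h := intervalIntegral.norm_integral_le_of_norm_le_const (C := 1)
      (f := fun s => (1 - |s|/T) * Real.cos (s*x)) (a := -T) (b := T) ?_
  · rw [Real.norm_eq_abs] at h
    calc |tentK T x| ≤ 1 * |T - -T| := h
    _ = 2*T := by rw [show T - -T = 2*T by ring, _root_.abs_of_nonneg (by linarith : (0:ℝ) ≤ 2*T)]; ring
  · intro s hs
    rw [uIoc_of_le (by linarith : -T ≤ T)] at hs
    have hs1 : |s| ≤ T := abs_le.mpr ⟨hs.1.le, hs.2⟩
    have h1 : 0 ≤ |s|/T := by positivity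
    have h2 : |s|/T ≤ 1 := by rw [div_le_one hT]; exact hs1
    rw [Real.norm_eq_abs, abs_mul]
    have h3 : |1 - |s|/T| ≤ 1 := by
      rw [_root_.abs_of_nonneg (by linarith : (0:ℝ) ≤ 1 - |s|/T)]; linarith
    calc |1 - |s|/T| * |Real.cos (s*x)| ≤ 1 * 1 :=
      mul_le_mul h3 (Real.abs_cos_le_one _) (abs_nonneg _) zero_le_one
    _ = 1 := by ring

lemma pair_eval {T : ℝ} (hT : 0 < T) (x c : ℝ) (Z : ℂ) :
    (∫ s in (-T)..T,
        ((1 - |s|/T : ℝ) : ℂ) * (Z * Complex.exp (((-((s + c) * x) : ℝ) : ℂ) * Complex.I)))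
      = Z * Complex.exp (((-(c * x) : ℝ) : ℂ) * Complex.I) * ((tentK T x : ℝ) : ℂ) := by
  have hsplit : ∀ s : ℝ,
      ((1 - |s|/T : ℝ) : ℂ) * (Z * Complex.exp (((-((s + c) * x) : ℝ) : ℂ) * Complex.I))
      = (Z * Complex.exp (((-(c * x) : ℝ) : ℂ) * Complex.I)) *
        (((1 - |s|/T : ℝ) : ℂ) * Complex.exp (((-(s * x) : ℝ) : ℂ) * Complex.I)) := by
    intro s
    rw [show (((-((s + c) * x) : ℝ)) : ℂ) * Complex.I
        = ((-(c*x) : ℝ) : ℂ) * Complex.I + ((-(s*x) : ℝ) : ℂ) * Complex.I by push_cast; ring,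
      Complex.exp_add]
    ring
  simp only [hsplit]
  rw [intervalIntegral.integral_const_mul]
  congr 1
  have heuler : ∀ s : ℝ,
      ((1 - |s|/T : ℝ) : ℂ) * Complex.exp (((-(s * x) : ℝ) : ℂ) * Complex.I)
      = (((1 - |s|/T) * Real.cos (s*x) : ℝ) : ℂ)
        + ((-((1 - |s|/T) * Real.sin (s*x)) : ℝ) : ℂ) * Complex.I := by
    intro s
    rw [Complex.exp_mul_I, ← Complex.ofReal_cos, ← Complex.ofReal_sin,
      Real.cos_neg, Real.sin_neg]
    push_cast
    ring
  simp only [heuler]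
  have hi1 : IntervalIntegrable (fun s : ℝ => (((1 - |s|/T) * Real.cos (s*x) : ℝ) : ℂ))
      volume (-T) T :=
    Continuous.intervalIntegrable (by exact Complex.continuous_ofReal.comp (contTentC T x)) _ _
  have hi2 : IntervalIntegrable
      (fun s : ℝ => ((-((1 - |s|/T) * Real.sin (s*x)) : ℝ) : ℂ) * Complex.I) volume (-T) T :=
    Continuous.intervalIntegrable
      (by exact (Complex.continuous_ofReal.comp (contTentS T x).neg).mul continuous_const) _ _
  rw [intervalIntegral.integral_add hi1 hi2,
    intervalIntegral.integral_mul_const, intervalIntegral.integral_ofReal,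
    intervalIntegral.integral_ofReal]
  have hodd : (∫ s in (-T)..T, -((1 - |s|/T) * Real.sin (s*x))) = 0 := by
    apply int_odd (contTentS T x).neg
    intro s
    simp only [Pi.neg_apply]
    rw [abs_neg, show (-s)*x = -(s*x) by ring, Real.sin_neg]
    ring
  rw [hodd]
  simp [tentK]

lemma cont_F (γ : ℕ → ℂ) (hγ : Summable fun n => ‖γ n‖) (lam : ℕ → ℝ) :
    Continuous fun t : ℝ => ∑' n, γ n * Complex.exp (((-(t * lam n) : ℝ) : ℂ) * Complex.I) := by
  apply continuous_tsum (u := fun n => ‖γ n‖) ?_ hγ ?_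
  · intro n
    exact continuous_const.mul (contE2 (lam n))
  · intro n t
    rw [norm_mul, Complex.norm_exp_ofReal_mul_I, mul_one]

lemma spectral {T : ℝ} (hT : 0 < T) (γ : ℕ → ℂ) (hγ : Summable fun n => ‖γ n‖)
    (lam : ℕ → ℝ) (c : ℝ) :
    (∫ s in (-T)..T, (1 - |s|/T) *
        ‖∑' n, γ n * Complex.exp (((-((s + c) * lam n) : ℝ) : ℂ) * Complex.I)‖ ^ 2)
      = ∑' p : ℕ × ℕ,
          (γ p.1 * (starRingEnd ℂ) (γ p.2)
            * Complex.exp (((-(c * (lam p.1 - lam p.2)) : ℝ) : ℂ) * Complex.I)).re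
          * tentK T (lam p.1 - lam p.2) := by
  have hle : -T ≤ T := by linarith
  set F : ℝ → ℂ := fun t => ∑' n, γ n * Complex.exp (((-(t * lam n) : ℝ) : ℂ) * Complex.I)
    with hFdef
  have hFc : Continuous F := cont_F γ hγ lam
  have hnorm1 : ∀ t : ℝ,
      Summable fun n => ‖γ n * Complex.exp (((-(t * lam n) : ℝ) : ℂ) * Complex.I)‖ := by
    intro t
    have h : (fun n => ‖γ n * Complex.exp (((-(t * lam n) : ℝ) : ℂ) * Complex.I)‖)
        = fun n => ‖γ n‖ := by
      funext n
      rw [norm_mul, Complex.norm_exp_ofReal_mul_I, mul_one]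
    rw [h]; exact hγ
  have hnorm2 : ∀ t : ℝ,
      Summable fun n =>
        ‖(starRingEnd ℂ) (γ n * Complex.exp (((-(t * lam n) : ℝ) : ℂ) * Complex.I))‖ := by
    intro t
    have h : (fun n =>
        ‖(starRingEnd ℂ) (γ n * Complex.exp (((-(t * lam n) : ℝ) : ℂ) * Complex.I))‖)
        = fun n => ‖γ n * Complex.exp (((-(t * lam n) : ℝ) : ℂ) * Complex.I)‖ := by
      funext n
      rw [starRingEnd_apply, norm_star]
    rw [h]; exact hnorm1 t
  have hprod : ∀ t : ℝ, F t * (starRingEnd ℂ) (F t)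
      = ∑' p : ℕ × ℕ, γ p.1 * (starRingEnd ℂ) (γ p.2)
          * Complex.exp (((-(t * (lam p.1 - lam p.2)) : ℝ) : ℂ) * Complex.I) := by
    intro t
    have hconj : (starRingEnd ℂ) (F t)
        = ∑' n, (starRingEnd ℂ) (γ n * Complex.exp (((-(t * lam n) : ℝ) : ℂ) * Complex.I)) := by
      simp only [hFdef]
      rw [starRingEnd_apply, tsum_star]
      exact tsum_congr fun n => by rw [starRingEnd_apply]
    rw [hconj]
    simp only [hFdef]
    rw [tsum_mul_tsum_of_summable_norm (hnorm1 t) (hnorm2 t)]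
    apply tsum_congr
    rintro ⟨m, n⟩
    simp only
    have hce : (starRingEnd ℂ) (Complex.exp (((-(t * lam n) : ℝ) : ℂ) * Complex.I))
        = Complex.exp (((t * lam n : ℝ) : ℂ) * Complex.I) := by
      rw [← Complex.exp_conj]
      congr 1
      rw [map_mul, Complex.conj_ofReal, Complex.conj_I]
      push_cast
      ring
    rw [map_mul, hce]
    have hee : Complex.exp (((-(t * lam m) : ℝ) : ℂ) * Complex.I)
        * Complex.exp (((t * lam n : ℝ) : ℂ) * Complex.I)
        = Complex.exp (((-(t * (lam m - lam n)) : ℝ) : ℂ) * Complex.I) := by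
      rw [← Complex.exp_add]
      congr 1
      push_cast
      ring
    calc γ m * Complex.exp (((-(t * lam m) : ℝ) : ℂ) * Complex.I)
        * ((starRingEnd ℂ) (γ n) * Complex.exp (((t * lam n : ℝ) : ℂ) * Complex.I))
        = γ m * (starRingEnd ℂ) (γ n) * (Complex.exp (((-(t * lam m) : ℝ) : ℂ) * Complex.I)
            * Complex.exp (((t * lam n : ℝ) : ℂ) * Complex.I)) := by ring
      _ = _ := by rw [hee]
  set P : ℕ × ℕ → ℝ → ℂ := fun p s =>
    ((1 - |s|/T : ℝ) : ℂ) * (γ p.1 * (starRingEnd ℂ) (γ p.2)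
      * Complex.exp (((-((s + c) * (lam p.1 - lam p.2)) : ℝ) : ℂ) * Complex.I)) with hPdef
  have hPcont : ∀ p, Continuous (P p) := by
    intro p
    exact (Complex.continuous_ofReal.comp (contTent T)).mul
      (continuous_const.mul (contE c (lam p.1 - lam p.2)))
  have hPint : ∀ p, Integrable (P p) (volume.restrict (Ioc (-T) T)) := fun p =>
    (hPcont p).integrableOn_Ioc
  have hPle : ∀ p : ℕ × ℕ, ∀ s ∈ Ioc (-T) T, ‖P p s‖ ≤ ‖γ p.1‖ * ‖γ p.2‖ := by
    rintro ⟨m, n⟩ s hs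
    have hs1 : |s| ≤ T := abs_le.mpr ⟨hs.1.le, hs.2⟩
    have h1 : 0 ≤ |s|/T := by positivity
    have h2 : |s|/T ≤ 1 := by rw [div_le_one hT]; exact hs1
    simp only [hPdef]
    rw [norm_mul, norm_mul, norm_mul, Complex.norm_real, Real.norm_eq_abs,
      Complex.norm_exp_ofReal_mul_I, mul_one,
      starRingEnd_apply, norm_star, _root_.abs_of_nonneg (by linarith : (0:ℝ) ≤ 1 - |s|/T)]
    calc (1 - |s|/T) * (‖γ m‖ * ‖γ n‖) ≤ 1 * (‖γ m‖ * ‖γ n‖) := by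
          apply mul_le_mul_of_nonneg_right (by linarith)
          positivity
    _ = ‖γ m‖ * ‖γ n‖ := by ring
  have hvol : (volume (Ioc (-T) T)).toReal = 2*T := by
    rw [Real.volume_Ioc, ENNReal.toReal_ofReal (by linarith : (0:ℝ) ≤ T - -T)]
    ring
  have hIntNorm : ∀ p : ℕ × ℕ,
      (∫ s in Ioc (-T) T, ‖P p s‖) ≤ ‖γ p.1‖ * ‖γ p.2‖ * (2*T) := by
    intro p
    have h1 : (∫ s in Ioc (-T) T, ‖P p s‖) ≤ ∫ _ in Ioc (-T) T, ‖γ p.1‖ * ‖γ p.2‖ :=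
      setIntegral_mono_on (hPint p).norm
        (integrableOn_const (by rw [Real.volume_Ioc]; exact ENNReal.ofReal_ne_top))
        measurableSet_Ioc (hPle p)
    rw [setIntegral_const, measureReal_def, hvol, smul_eq_mul] at h1
    linarith [h1]
  have hsumnorm : Summable fun p : ℕ × ℕ => ∫ s in Ioc (-T) T, ‖P p s‖ := by
    apply Summable.of_nonneg_of_le
      (fun p => MeasureTheory.integral_nonneg (fun s => norm_nonneg _)) hIntNorm
    exact (hγ.mul_of_nonneg hγ (fun n => norm_nonneg _) (fun n => norm_nonneg _)).mul_right (2*T)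
  have hswap : (∑' p : ℕ × ℕ, ∫ s in Ioc (-T) T, P p s)
      = ∫ s in Ioc (-T) T, (∑' p : ℕ × ℕ, P p s) :=
    integral_tsum_of_summable_integral_norm hPint hsumnorm
  have hre : ∀ s : ℝ, (1 - |s|/T) * ‖F (s+c)‖ ^ 2
      = (((1 - |s|/T : ℝ) : ℂ) * (F (s+c) * (starRingEnd ℂ) (F (s+c)))).re := by
    intro s
    rw [Complex.mul_conj, ← Complex.ofReal_mul, Complex.ofReal_re, Complex.normSq_eq_norm_sq]
  have htsum_eq : ∀ s : ℝ,
      ((1 - |s|/T : ℝ) : ℂ) * (F (s+c) * (starRingEnd ℂ) (F (s+c)))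
      = ∑' p : ℕ × ℕ, P p s := by
    intro s
    rw [hprod (s+c), ← tsum_mul_left]
  have hIcont : Continuous fun s : ℝ =>
      ((1 - |s|/T : ℝ) : ℂ) * (F (s+c) * (starRingEnd ℂ) (F (s+c))) := by
    apply (Complex.continuous_ofReal.comp (contTent T)).mul
    exact (hFc.comp (continuous_id.add continuous_const)).mul
      (Complex.continuous_conj.comp (hFc.comp (continuous_id.add continuous_const)))
  have hIint : Integrable (fun s : ℝ =>
      ((1 - |s|/T : ℝ) : ℂ) * (F (s+c) * (starRingEnd ℂ) (F (s+c))))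
      (volume.restrict (Ioc (-T) T)) := hIcont.integrableOn_Ioc
  have hSummableInt : Summable fun p : ℕ × ℕ => ∫ s in Ioc (-T) T, P p s := by
    apply Summable.of_norm_bounded hsumnorm
    intro p
    exact MeasureTheory.norm_integral_le_integral_norm _
  calc (∫ s in (-T)..T, (1 - |s|/T) *
        ‖∑' n, γ n * Complex.exp (((-((s + c) * lam n) : ℝ) : ℂ) * Complex.I)‖ ^ 2)
      = ∫ s in Ioc (-T) T, (1 - |s|/T) * ‖F (s+c)‖ ^ 2 := by
        rw [intervalIntegral.integral_of_le hle]
    _ = ∫ s in Ioc (-T) T,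
        (((1 - |s|/T : ℝ) : ℂ) * (F (s+c) * (starRingEnd ℂ) (F (s+c)))).re :=
        integral_congr_ae (Filter.Eventually.of_forall fun s => hre s)
    _ = (∫ s in Ioc (-T) T,
        ((1 - |s|/T : ℝ) : ℂ) * (F (s+c) * (starRingEnd ℂ) (F (s+c)))).re := by
        have h := ContinuousLinearMap.integral_comp_comm Complex.reCLM hIint
        simp only [Complex.reCLM_apply] at h
        exact h
    _ = (∑' p : ℕ × ℕ, ∫ s in Ioc (-T) T, P p s).re := by
        congr 1
        rw [hswap]
        exact integral_congr_ae (Filter.Eventually.of_forall fun s => htsum_eq s)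
    _ = ∑' p : ℕ × ℕ, (∫ s in Ioc (-T) T, P p s).re := by
        have h := Complex.reCLM.map_tsum hSummableInt
        simpa only [Complex.reCLM_apply] using h
    _ = _ := by
        apply tsum_congr
        rintro ⟨m, n⟩
        have h1 : (∫ s in Ioc (-T) T, P (m, n) s) = ∫ s in (-T)..T, P (m, n) s :=
          (intervalIntegral.integral_of_le hle).symm
        rw [h1]
        simp only [hPdef]
        rw [pair_eval hT (lam m - lam n) c (γ m * (starRingEnd ℂ) (γ n))]
        simp [Complex.mul_re, Complex.ofReal_re, Complex.ofReal_im]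

lemma key {T : ℝ} (hT : 0 < T) (α : ℕ → ℂ) (B : ℕ → ℝ) (lam : ℕ → ℝ)
    (hαB : ∀ n, ‖α n‖ ≤ B n) (hB : Summable B) (c : ℝ) :
    (∫ s in (-T)..T, (1 - |s|/T) *
        ‖∑' n, α n * Complex.exp (((-((s + c) * lam n) : ℝ) : ℂ) * Complex.I)‖ ^ 2)
      ≤ ∫ s in (-T)..T, (1 - |s|/T) *
        ‖∑' n, ((B n : ℝ) : ℂ) * Complex.exp (((-(s * lam n) : ℝ) : ℂ) * Complex.I)‖ ^ 2 := by
  have hBnn : ∀ n, 0 ≤ B n := fun n => (norm_nonneg _).trans (hαB n)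
  have hα : Summable fun n => ‖α n‖ :=
    Summable.of_nonneg_of_le (fun n => norm_nonneg _) hαB hB
  have hBn : Summable fun n => ‖((B n : ℝ) : ℂ)‖ := by
    have h : (fun n => ‖((B n : ℝ) : ℂ)‖) = B := by
      funext n
      rw [Complex.norm_real, Real.norm_eq_abs, _root_.abs_of_nonneg (hBnn n)]
    rw [h]; exact hB
  have h1 := spectral hT α hα lam c
  have h2 := spectral hT (fun n => ((B n : ℝ) : ℂ)) hBn lam 0
  simp only [add_zero] at h2
  rw [h1, h2]
  have hterm : ∀ p : ℕ × ℕ,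
      (α p.1 * (starRingEnd ℂ) (α p.2)
        * Complex.exp (((-(c * (lam p.1 - lam p.2)) : ℝ) : ℂ) * Complex.I)).re
        * tentK T (lam p.1 - lam p.2)
      ≤ (((B p.1 : ℝ) : ℂ) * (starRingEnd ℂ) ((B p.2 : ℝ) : ℂ)
        * Complex.exp (((-((0:ℝ) * (lam p.1 - lam p.2)) : ℝ) : ℂ) * Complex.I)).re
        * tentK T (lam p.1 - lam p.2) := by
    rintro ⟨m, n⟩
    simp only [zero_mul, neg_zero, Complex.ofReal_zero, Complex.exp_zero, mul_one,
      Complex.conj_ofReal]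
    apply mul_le_mul_of_nonneg_right _ (tentK_nonneg hT _)
    have hre := Complex.re_le_norm (α m * (starRingEnd ℂ) (α n)
      * Complex.exp (((-(c * (lam m - lam n)) : ℝ) : ℂ) * Complex.I))
    have habs : ‖α m * (starRingEnd ℂ) (α n)
        * Complex.exp (((-(c * (lam m - lam n)) : ℝ) : ℂ) * Complex.I)‖
        ≤ B m * B n := by
      rw [norm_mul, norm_mul, Complex.norm_exp_ofReal_mul_I, mul_one, Complex.norm_conj]
      exact mul_le_mul (hαB m) (hαB n) (norm_nonneg _) (hBnn m)
    have hBre : ((((B m : ℝ) : ℂ)) * (((B n : ℝ) : ℂ))).re = B m * B n := by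
      rw [← Complex.ofReal_mul, Complex.ofReal_re]
    rw [hBre]
    exact hre.trans habs
  apply Summable.tsum_le_tsum hterm
  · apply Summable.of_norm_bounded (g :=
      fun p : ℕ × ℕ => ‖α p.1‖ * ‖α p.2‖ * (2*T))
      ((hα.mul_of_nonneg hα (fun n => norm_nonneg _) (fun n => norm_nonneg _)).mul_right (2*T))
    rintro ⟨m, n⟩
    rw [Real.norm_eq_abs, abs_mul]
    have h3 : |(α m * (starRingEnd ℂ) (α n)
        * Complex.exp (((-(c * (lam m - lam n)) : ℝ) : ℂ) * Complex.I)).re|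
        ≤ ‖α m‖ * ‖α n‖ := by
      have h4 := Complex.abs_re_le_norm (α m * (starRingEnd ℂ) (α n)
        * Complex.exp (((-(c * (lam m - lam n)) : ℝ) : ℂ) * Complex.I))
      rw [norm_mul, norm_mul, Complex.norm_exp_ofReal_mul_I, mul_one, Complex.norm_conj] at h4
      simpa using h4
    calc |(α m * (starRingEnd ℂ) (α n)
          * Complex.exp (((-(c * (lam m - lam n)) : ℝ) : ℂ) * Complex.I)).re|
          * |tentK T (lam m - lam n)|
        ≤ (‖α m‖ * ‖α n‖) * (2*T) := by
          apply mul_le_mul h3 (tentK_abs_le hT _) (abs_nonneg _) (by positivity)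
      _ = ‖α m‖ * ‖α n‖ * (2*T) := by ring
  · apply Summable.of_norm_bounded (g :=
      fun p : ℕ × ℕ => B p.1 * B p.2 * (2*T))
      ((hB.mul_of_nonneg hB hBnn hBnn).mul_right (2*T))
    rintro ⟨m, n⟩
    simp only [zero_mul, neg_zero, Complex.ofReal_zero, Complex.exp_zero, mul_one,
      Complex.conj_ofReal]
    rw [Real.norm_eq_abs, abs_mul]
    have h4 : |((((B m : ℝ) : ℂ)) * (((B n : ℝ) : ℂ))).re| = B m * B n := by
      rw [← Complex.ofReal_mul, Complex.ofReal_re,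
        _root_.abs_of_nonneg (mul_nonneg (hBnn m) (hBnn n))]
    rw [h4]
    exact mul_le_mul_of_nonneg_left (tentK_abs_le hT _) (mul_nonneg (hBnn m) (hBnn n))

lemma stitch {T : ℝ} (hT : 0 < T) (f : ℝ → ℝ) (hfc : Continuous f) (hf : ∀ t, 0 ≤ f t) :
    (∫ t in (-T)..T, f t)
      ≤ (∫ s in (-T)..T, (1 - |s|/T) * f (s + -T))
        + ((∫ s in (-T)..T, (1 - |s|/T) * f (s + 0))
          + (∫ s in (-T)..T, (1 - |s|/T) * f (s + T))) := by
  have hg : ∀ c : ℝ, Continuous fun t => (1 - |t - c|/T) * f t := by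
    intro c
    exact (continuous_const.sub (((continuous_id.sub continuous_const).abs).div_const T)).mul hfc
  have hii : ∀ (c a b : ℝ), IntervalIntegrable (fun t => (1 - |t - c|/T) * f t) volume a b :=
    fun c a b => (hg c).intervalIntegrable a b
  have hshift : ∀ c : ℝ, (∫ s in (-T)..T, (1 - |s|/T) * f (s + c))
      = ∫ t in (-T+c)..(T+c), (1 - |t - c|/T) * f t := by
    intro c
    rw [← intervalIntegral.integral_comp_add_right (fun t => (1 - |t - c|/T) * f t) c]
    apply intervalIntegral.integral_congr
    intro s _
    simp
  have hnn : ∀ (c a b : ℝ), a ≤ b → (∀ t ∈ Icc a b, |t - c| ≤ T) →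
      0 ≤ ∫ t in a..b, (1 - |t - c|/T) * f t := by
    intro c a b hab habs
    apply intervalIntegral.integral_nonneg hab
    intro u hu
    have h1 : |u - c|/T ≤ 1 := by rw [div_le_one hT]; exact habs u hu
    have h2 : 0 ≤ |u - c|/T := by positivity
    exact mul_nonneg (by linarith) (hf u)
  have e1 : (∫ s in (-T)..T, (1 - |s|/T) * f (s + -T))
      = (∫ t in (-2*T)..(-T), (1 - |t - -T|/T) * f t)
        + ∫ t in (-T)..(0:ℝ), (1 - |t - -T|/T) * f t := by
    rw [hshift (-T), show -T + -T = -2*T by ring, show T + -T = (0:ℝ) by ring]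
    exact (intervalIntegral.integral_add_adjacent_intervals
      (hii (-T) (-2*T) (-T)) (hii (-T) (-T) 0)).symm
  have e2 : (∫ s in (-T)..T, (1 - |s|/T) * f (s + 0))
      = (∫ t in (-T)..(0:ℝ), (1 - |t - 0|/T) * f t)
        + ∫ t in (0:ℝ)..T, (1 - |t - 0|/T) * f t := by
    rw [hshift 0, show -T + 0 = -T by ring, show T + 0 = T by ring]
    exact (intervalIntegral.integral_add_adjacent_intervals
      (hii 0 (-T) 0) (hii 0 0 T)).symm
  have e3 : (∫ s in (-T)..T, (1 - |s|/T) * f (s + T))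
      = (∫ t in (0:ℝ)..T, (1 - |t - T|/T) * f t)
        + ∫ t in T..(2*T), (1 - |t - T|/T) * f t := by
    rw [hshift T, show -T + T = (0:ℝ) by ring, show T + T = 2*T by ring]
    exact (intervalIntegral.integral_add_adjacent_intervals
      (hii T 0 T) (hii T T (2*T))).symm
  have c1 : (∫ t in (-T)..(0:ℝ), f t)
      = (∫ t in (-T)..(0:ℝ), (1 - |t - -T|/T) * f t)
        + ∫ t in (-T)..(0:ℝ), (1 - |t - 0|/T) * f t := by
    rw [← intervalIntegral.integral_add (hii (-T) (-T) 0) (hii 0 (-T) 0)]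
    apply intervalIntegral.integral_congr
    intro t ht
    rw [uIcc_of_le (by linarith : -T ≤ (0:ℝ))] at ht
    obtain ⟨ht1, ht2⟩ := ht
    have ha : |t - -T| = t + T := by
      rw [_root_.abs_of_nonneg (by linarith : (0:ℝ) ≤ t - -T)]; ring
    have hb : |t - 0| = -t := by rw [sub_zero, abs_of_nonpos ht2]
    simp only [ha, hb]
    field_simp
    ring
  have c2 : (∫ t in (0:ℝ)..T, f t)
      = (∫ t in (0:ℝ)..T, (1 - |t - 0|/T) * f t)
        + ∫ t in (0:ℝ)..T, (1 - |t - T|/T) * f t := by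
    rw [← intervalIntegral.integral_add (hii 0 0 T) (hii T 0 T)]
    apply intervalIntegral.integral_congr
    intro t ht
    rw [uIcc_of_le hT.le] at ht
    obtain ⟨ht1, ht2⟩ := ht
    have ha : |t - 0| = t := by rw [sub_zero, _root_.abs_of_nonneg ht1]
    have hb : |t - T| = T - t := by
      rw [abs_of_nonpos (by linarith : t - T ≤ 0)]; ring
    simp only [ha, hb]
    field_simp
    ring
  have hsplitf : (∫ t in (-T)..T, f t)
      = (∫ t in (-T)..(0:ℝ), f t) + ∫ t in (0:ℝ)..T, f t :=
    (intervalIntegral.integral_add_adjacent_intervals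
      (hfc.intervalIntegrable _ _) (hfc.intervalIntegrable _ _)).symm
  have n1 : 0 ≤ ∫ t in (-2*T)..(-T), (1 - |t - -T|/T) * f t := by
    apply hnn (-T) (-2*T) (-T) (by linarith)
    intro t ht
    rw [abs_le]
    constructor <;> [linarith [ht.1]; linarith [ht.2]]
  have n3 : 0 ≤ ∫ t in T..(2*T), (1 - |t - T|/T) * f t := by
    apply hnn T T (2*T) (by linarith)
    intro t ht
    rw [abs_le]
    constructor <;> [linarith [ht.1]; linarith [ht.2]]
  rw [hsplitf, e1, e2, e3, c1, c2]
  linarith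

lemma tent_le {T : ℝ} (hT : 0 < T) (f : ℝ → ℝ) (hfc : Continuous f) (hf : ∀ t, 0 ≤ f t) :
    (∫ s in (-T)..T, (1 - |s|/T) * f s) ≤ ∫ s in (-T)..T, f s := by
  apply intervalIntegral.integral_mono_on (by linarith)
    (((contTent T).mul hfc).intervalIntegrable _ _)
    (hfc.intervalIntegrable _ _)
  intro s _
  have h2 : 0 ≤ |s|/T := by positivity
  simp only [Pi.mul_apply]
  nlinarith [hf s, mul_nonneg h2 (hf s)]

end MontAux

open MontAux
theorem montgomery_mean_value (a : ℕ → ℂ) (b : ℕ → ℝ)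
    (hb0 : ∀ n : ℕ, 1 ≤ n → 0 ≤ b n)
    (hab : ∀ n : ℕ, 1 ≤ n → ‖a n‖ ≤ b n)
    (hconv : ∀ σ : ℝ, 1 < σ → Summable (fun n : ℕ => b (n + 1) / ((n : ℝ) + 1) ^ σ)) :
    ∀ σ : ℝ, 1 < σ → ∀ T : ℝ, 0 ≤ T →
      (∫ t in (-T)..T,
          ‖∑' n : ℕ, a (n + 1) * (((n : ℂ) + 1) ^ (-(↑σ + Complex.I * ↑t)))‖ ^ 2)
        ≤ 3 * ∫ t in (-T)..T,
          ‖∑' n : ℕ, (b (n + 1) : ℂ) * (((n : ℂ) + 1) ^ (-(↑σ + Complex.I * ↑t)))‖ ^ 2 := by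
  intro σ hσ T hT0
  rcases eq_or_lt_of_le hT0 with h0 | hT
  · rw [← h0]
    norm_num
  set lam : ℕ → ℝ := fun n => Real.log ((n:ℝ)+1) with hlam
  set α : ℕ → ℂ := fun n => a (n+1) * ((((n:ℝ)+1) ^ (-σ) : ℝ) : ℂ) with hα
  set B : ℕ → ℝ := fun n => b (n+1) * ((n:ℝ)+1) ^ (-σ) with hB
  have hrpos : ∀ n : ℕ, (0:ℝ) < (n:ℝ)+1 := fun n => by positivity
  have hBnn : ∀ n, 0 ≤ B n := fun n =>
    mul_nonneg (hb0 (n+1) (Nat.le_add_left 1 n)) (Real.rpow_nonneg (hrpos n).le _)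
  have hαB : ∀ n, ‖α n‖ ≤ B n := by
    intro n
    simp only [hα, hB]
    rw [norm_mul, Complex.norm_real, Real.norm_eq_abs,
      _root_.abs_of_nonneg (Real.rpow_nonneg (hrpos n).le _)]
    exact mul_le_mul_of_nonneg_right (hab (n+1) (Nat.le_add_left 1 n))
      (Real.rpow_nonneg (hrpos n).le _)
  have hBsum : Summable B := by
    refine (hconv σ hσ).congr fun n => ?_
    simp only [hB]
    rw [Real.rpow_neg (hrpos n).le, div_eq_mul_inv]
  have hcast : ∀ (n : ℕ) (t : ℝ),
      ((n:ℂ)+1) ^ (-(↑σ + Complex.I * ↑t))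
        = ((((n:ℝ)+1) ^ (-σ) : ℝ) : ℂ)
          * Complex.exp (((-(t * lam n) : ℝ) : ℂ) * Complex.I) := by
    intro n t
    have hr := hrpos n
    have hbase : ((n:ℂ)+1) = ((((n:ℝ)+1) : ℝ) : ℂ) := by push_cast; ring
    rw [hbase, Complex.cpow_def_of_ne_zero (by exact_mod_cast hr.ne'),
      ← Complex.ofReal_log hr.le, Real.rpow_def_of_pos hr, Complex.ofReal_exp,
      ← Complex.exp_add]
    congr 1
    simp only [hlam]
    push_cast
    ring
  have hFeq : (∫ t in (-T)..T,
      ‖∑' n : ℕ, a (n + 1) * (((n : ℂ) + 1) ^ (-(↑σ + Complex.I * ↑t)))‖ ^ 2)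
      = ∫ t in (-T)..T,
        ‖∑' n, α n * Complex.exp (((-(t * lam n) : ℝ) : ℂ) * Complex.I)‖ ^ 2 := by
    apply intervalIntegral.integral_congr
    intro t _
    have h : (∑' n : ℕ, a (n + 1) * (((n : ℂ) + 1) ^ (-(↑σ + Complex.I * ↑t))))
        = ∑' n, α n * Complex.exp (((-(t * lam n) : ℝ) : ℂ) * Complex.I) := by
      apply tsum_congr
      intro n
      rw [hcast n t]
      simp only [hα]
      ring
    simp only [h]
  have hGeq : (∫ t in (-T)..T,
      ‖∑' n : ℕ, (b (n + 1) : ℂ) * (((n : ℂ) + 1) ^ (-(↑σ + Complex.I * ↑t)))‖ ^ 2)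
      = ∫ t in (-T)..T,
        ‖∑' n, ((B n : ℝ) : ℂ) * Complex.exp (((-(t * lam n) : ℝ) : ℂ) * Complex.I)‖ ^ 2 := by
    apply intervalIntegral.integral_congr
    intro t _
    have h : (∑' n : ℕ, (b (n + 1) : ℂ) * (((n : ℂ) + 1) ^ (-(↑σ + Complex.I * ↑t))))
        = ∑' n, ((B n : ℝ) : ℂ) * Complex.exp (((-(t * lam n) : ℝ) : ℂ) * Complex.I) := by
      apply tsum_congr
      intro n
      rw [hcast n t]
      simp only [hB]
      push_cast
      ring
    simp only [h]
  rw [hFeq, hGeq]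
  have hαsum : Summable fun n => ‖α n‖ :=
    Summable.of_nonneg_of_le (fun n => norm_nonneg _) hαB hBsum
  have hFc : Continuous fun t : ℝ =>
      ∑' n, α n * Complex.exp (((-(t * lam n) : ℝ) : ℂ) * Complex.I) := cont_F α hαsum lam
  have hBn : Summable fun n => ‖((B n : ℝ) : ℂ)‖ := by
    have h : (fun n => ‖((B n : ℝ) : ℂ)‖) = B := by
      funext n
      rw [Complex.norm_real, Real.norm_eq_abs, _root_.abs_of_nonneg (hBnn n)]
    rw [h]; exact hBsum
  have hGc : Continuous fun t : ℝ =>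
      ∑' n, ((B n : ℝ) : ℂ) * Complex.exp (((-(t * lam n) : ℝ) : ℂ) * Complex.I) :=
    cont_F _ hBn lam
  have hstitch := stitch hT
    (fun t => ‖∑' n, α n * Complex.exp (((-(t * lam n) : ℝ) : ℂ) * Complex.I)‖ ^ 2)
    (hFc.norm.pow 2) (fun t => by positivity)
  have hk1 := key hT α B lam hαB hBsum (-T)
  have hk2 := key hT α B lam hαB hBsum 0
  have hk3 := key hT α B lam hαB hBsum T
  have htent := tent_le hT
    (fun t => ‖∑' n, ((B n : ℝ) : ℂ) * Complex.exp (((-(t * lam n) : ℝ) : ℂ) * Complex.I)‖ ^ 2)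
    (hGc.norm.pow 2) (fun t => by positivity)
  calc (∫ t in (-T)..T,
      ‖∑' n, α n * Complex.exp (((-(t * lam n) : ℝ) : ℂ) * Complex.I)‖ ^ 2)
      ≤ _ := hstitch
    _ ≤ (∫ s in (-T)..T, (1 - |s|/T) *
          ‖∑' n, ((B n : ℝ) : ℂ) * Complex.exp (((-(s * lam n) : ℝ) : ℂ) * Complex.I)‖ ^ 2)
        + ((∫ s in (-T)..T, (1 - |s|/T) *
          ‖∑' n, ((B n : ℝ) : ℂ) * Complex.exp (((-(s * lam n) : ℝ) : ℂ) * Complex.I)‖ ^ 2)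
        + (∫ s in (-T)..T, (1 - |s|/T) *
          ‖∑' n, ((B n : ℝ) : ℂ) * Complex.exp (((-(s * lam n) : ℝ) : ℂ) * Complex.I)‖ ^ 2)) :=
        add_le_add hk1 (add_le_add hk2 hk3)
    _ = 3 * ∫ s in (-T)..T, (1 - |s|/T) *
          ‖∑' n, ((B n : ℝ) : ℂ) * Complex.exp (((-(s * lam n) : ℝ) : ℂ) * Complex.I)‖ ^ 2 := by
        ring
    _ ≤ 3 * ∫ t in (-T)..T,
          ‖∑' n, ((B n : ℝ) : ℂ) * Complex.exp (((-(t * lam n) : ℝ) : ℂ) * Complex.I)‖ ^ 2 := by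
        linarith [htent]
end
end

section
/- Fix a natural number D, real numbers ε > 0 and z ≥ 2, a finite multiset Γ of m real numbers (counted with multiplicity), an arithmetic function f : ℕ → ℂ, a real number δ ∈ (0,1), and a real number A ≥ m + 1 + ε. Suppose there is a constant C₀ > 0 such that |∑_{n ≤ x, P⁻(n) > z} f_Γ(n)| ≤ C₀·(x·(log z)^{D−m}/(log x)^{A−m} + x^{1 − δ/log z}/log z) whenever x ≥ z. Then there is a constant C > 0, depending only on ε, δ, C₀, D, m, such that for all N ≥ max{3, z}, all σ ∈ [1,2], all t ∈ ℝ, and all M > N, writing s = σ + it, |∑_{N < n ≤ M, P⁻(n) > z} f_Γ(n)·n^{−s}| ≤ C·(1+|t|)·N^{1−σ}·((log z)^{D−m}/(log N)^{A−m−1} + N^{−δ/log z}). -/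
open scoped BigOperators Classical
open Finset MeasureTheory intervalIntegral

noncomputable section


lemma one_lt_log_of_three_le {x : ℝ} (hx : 3 ≤ x) : 1 < Real.log x := by
  rw [Real.lt_log_iff_exp_lt (by linarith)]
  have h := Real.exp_one_lt_d9
  linarith

lemma myContOn_rpow (r : ℝ) {a b : ℝ} (ha : 0 < a) :
    ContinuousOn (fun x : ℝ => x ^ r) (Set.Icc a b) :=
  continuousOn_id.rpow_const (fun _ hx => Or.inl (ne_of_gt (lt_of_lt_of_le ha hx.1)))

lemma myContOn_cpow (c : ℂ) {a b : ℝ} (ha : 0 < a) :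
    ContinuousOn (fun x : ℝ => (x : ℂ) ^ c) (Set.Icc a b) :=
  ContinuousOn.cpow_const (Complex.continuous_ofReal.continuousOn)
    (fun _ hx => Complex.ofReal_mem_slitPlane.2 (lt_of_lt_of_le ha hx.1))

lemma myContOn_logrpow (r : ℝ) {a b : ℝ} (ha : 3 ≤ a) :
    ContinuousOn (fun x : ℝ => Real.log x ^ r) (Set.Icc a b) := by
  apply ContinuousOn.rpow_const
  · exact Real.continuousOn_log.mono (fun x hx => by
      simp only [Set.mem_compl_iff, Set.mem_singleton_iff]
      exact ne_of_gt (by linarith [hx.1] : (0:ℝ) < x))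
  · exact fun x hx => Or.inl
      (ne_of_gt (lt_trans one_pos (one_lt_log_of_three_le (le_trans ha hx.1))))

lemma aux_ftc_cpow {s : ℂ} (hs : s ≠ 0) {a b : ℝ} (ha : 0 < a) (hab : a ≤ b) :
    s * ∫ x in a..b, (x : ℂ) ^ (-s - 1) = (a : ℂ) ^ (-s) - (b : ℂ) ^ (-s) := by
  have hr : -s - 1 ≠ -1 := fun h => hs (by linear_combination -h)
  have hkey : ∫ x in a..b, (x : ℂ) ^ (-s - 1)
      = (b : ℂ) ^ (-s - 1 + 1) / (-s - 1 + 1) - (a : ℂ) ^ (-s - 1 + 1) / (-s - 1 + 1) := by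
    apply integral_eq_sub_of_hasDerivAt
    · intro x hx
      rw [Set.uIcc_of_le hab] at hx
      exact hasDerivAt_ofReal_cpow_const' (ne_of_gt (lt_of_lt_of_le ha hx.1)) hr
    · exact ((myContOn_cpow (-s - 1) ha).mono (by rw [Set.uIcc_of_le hab])).intervalIntegrable
  have h1 : -s - 1 + 1 = -s := by ring
  rw [hkey, h1]
  have hns : -s ≠ 0 := neg_ne_zero.2 hs
  field_simp
  ring

lemma aux_integral_inv_log_rpow {B a b : ℝ} (hB : 1 < B) (ha : 3 ≤ a) (hab : a ≤ b) :
    ∫ x in a..b, x⁻¹ * Real.log x ^ (-B) ≤ Real.log a ^ (1 - B) / (B - 1) := by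
  have hcont : ContinuousOn (fun x : ℝ => x⁻¹ * Real.log x ^ (-B)) (Set.Icc a b) :=
    (continuousOn_id.inv₀ (fun x hx => ne_of_gt (by linarith [hx.1] : (0:ℝ) < x))).mul
      (myContOn_logrpow (-B) ha)
  have hkey : ∫ x in a..b, x⁻¹ * Real.log x ^ (-B)
      = Real.log b ^ (1 - B) / (1 - B) - Real.log a ^ (1 - B) / (1 - B) := by
    apply integral_eq_sub_of_hasDerivAt
    · intro x hx
      rw [Set.uIcc_of_le hab] at hx
      have hx0 : (0:ℝ) < x := by linarith [hx.1]
      have hlx : 1 < Real.log x := one_lt_log_of_three_le (le_trans ha hx.1)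
      have hd := ((Real.hasDerivAt_log (ne_of_gt hx0)).rpow_const
        (p := 1 - B) (Or.inl (by linarith))).div_const (1 - B)
      refine hd.congr_deriv ?_
      have h1 : 1 - B - 1 = -B := by ring
      have hB0 : (1:ℝ) - B ≠ 0 := by linarith
      rw [h1]
      field_simp
    · exact (hcont.mono (by rw [Set.uIcc_of_le hab])).intervalIntegrable
  rw [hkey]
  have h2 : 0 ≤ Real.log b ^ (1 - B) :=
    Real.rpow_nonneg (le_trans zero_le_one (one_lt_log_of_three_le (le_trans ha hab)).le) _
  have e1 : Real.log b ^ (1 - B) / (1 - B) ≤ 0 :=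
    div_nonpos_of_nonneg_of_nonpos h2 (by linarith)
  have e2 : Real.log a ^ (1 - B) / (1 - B) = -(Real.log a ^ (1 - B) / (B - 1)) := by
    rw [show (1 - B) = -(B - 1) by ring, div_neg]
  linarith

lemma filter_split (pred : ℕ → Prop) {N M x : ℝ} (hN3 : 3 ≤ N) (hNx : N ≤ x) (hxM : x ≤ M) :
    ((Finset.Ioc ⌊N⌋₊ ⌊M⌋₊).filter pred).filter (fun n : ℕ => (n : ℝ) ≤ x)
      = (Finset.Icc 1 ⌊x⌋₊).filter pred \ (Finset.Icc 1 ⌊N⌋₊).filter pred := by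
  have hN0 : (0:ℝ) ≤ N := by linarith
  have hx0 : (0:ℝ) ≤ x := by linarith
  ext n
  simp only [Finset.mem_filter, Finset.mem_sdiff, Finset.mem_Ioc, Finset.mem_Icc]
  constructor
  · rintro ⟨⟨⟨h1, h2⟩, hp⟩, h3⟩
    have hNn : N < (n : ℝ) := (Nat.floor_lt hN0).1 h1
    have hn1 : 1 ≤ n := by
      rcases Nat.eq_zero_or_pos n with h | h
      · exfalso; rw [h] at hNn; push_cast at hNn; linarith
      · exact h
    refine ⟨⟨⟨hn1, Nat.le_floor h3⟩, hp⟩, ?_⟩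
    rintro ⟨⟨-, h5⟩, -⟩
    have : (n : ℝ) ≤ N := le_trans (Nat.cast_le.2 h5) (Nat.floor_le hN0)
    linarith
  · rintro ⟨⟨⟨hn1, h2⟩, hp⟩, h4⟩
    have hnx : (n : ℝ) ≤ x := le_trans (Nat.cast_le.2 h2) (Nat.floor_le hx0)
    have hNn : ⌊N⌋₊ < n := by
      by_contra h
      exact h4 ⟨⟨hn1, not_lt.1 h⟩, hp⟩
    exact ⟨⟨⟨hNn, Nat.le_floor (le_trans hnx hxM)⟩, hp⟩, hnx⟩

lemma sum_split (a : ℕ → ℂ) (pred : ℕ → Prop) {N M x : ℝ} (hN3 : 3 ≤ N) (hNx : N ≤ x)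
    (hxM : x ≤ M) :
    ∑ n ∈ ((Finset.Ioc ⌊N⌋₊ ⌊M⌋₊).filter pred).filter (fun n : ℕ => (n : ℝ) ≤ x), a n
      = (∑ n ∈ (Finset.Icc 1 ⌊x⌋₊).filter pred, a n)
        - ∑ n ∈ (Finset.Icc 1 ⌊N⌋₊).filter pred, a n := by
  rw [filter_split pred hN3 hNx hxM]
  exact Finset.sum_sdiff_eq_sub (Finset.filter_subset_filter _
    (Finset.Icc_subset_Icc le_rfl (Nat.floor_le_floor hNx)))

lemma main_identity (a : ℕ → ℂ) (pred : ℕ → Prop) {s : ℂ} (hs0 : s ≠ 0) {N M : ℝ}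
    (hN3 : 3 ≤ N) (hNM : N < M) :
    ∑ n ∈ (Finset.Ioc ⌊N⌋₊ ⌊M⌋₊).filter pred, a n * (n : ℂ) ^ (-s)
      = ((∑ n ∈ (Finset.Icc 1 ⌊M⌋₊).filter pred, a n)
            - ∑ n ∈ (Finset.Icc 1 ⌊N⌋₊).filter pred, a n) * (M : ℂ) ^ (-s)
        + s * ∫ x in Set.Ioc N M,
            (((∑ n ∈ (Finset.Icc 1 ⌊x⌋₊).filter pred, a n)
                - ∑ n ∈ (Finset.Icc 1 ⌊N⌋₊).filter pred, a n) * (x : ℂ) ^ (-s - 1)) := by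
  have hN0 : (0:ℝ) < N := by linarith
  have hM0 : (0:ℝ) < M := by linarith
  set g : ℝ → ℂ := fun y => (y : ℂ) ^ (-s - 1) with hg_def
  have hgInt : IntegrableOn g (Set.Ioc N M) volume :=
    ((myContOn_cpow (-s - 1) hN0).integrableOn_Icc).mono_set Set.Ioc_subset_Icc_self
  have hterm : ∀ n ∈ (Finset.Ioc ⌊N⌋₊ ⌊M⌋₊).filter pred,
      a n * (n : ℂ) ^ (-s) = a n * (M : ℂ) ^ (-s)
        + s * ∫ x in Set.Ioc N M, (Set.Icc (n : ℝ) M).indicator g x * a n := by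
    intro n hn
    simp only [Finset.mem_filter, Finset.mem_Ioc] at hn
    have hNn : N < (n : ℝ) := (Nat.floor_lt hN0.le).1 hn.1.1
    have hn0 : (0:ℝ) < (n : ℝ) := lt_trans hN0 hNn
    have hnM : (n : ℝ) ≤ M := le_trans (Nat.cast_le.2 hn.1.2) (Nat.floor_le hM0.le)
    have h1 : s * ∫ x in (n : ℝ)..M, (x : ℂ) ^ (-s - 1)
        = ((n : ℝ) : ℂ) ^ (-s) - (M : ℂ) ^ (-s) := aux_ftc_cpow hs0 hn0 hnM
    have hsub : Set.Icc (n : ℝ) M ⊆ Set.Ioc N M :=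
      fun y hy => ⟨lt_of_lt_of_le hNn hy.1, hy.2⟩
    have h2 : ∫ x in Set.Ioc N M, (Set.Icc (n : ℝ) M).indicator g x
        = ∫ x in (n : ℝ)..M, (x : ℂ) ^ (-s - 1) := by
      rw [setIntegral_indicator measurableSet_Icc, Set.inter_eq_self_of_subset_right hsub,
        integral_Icc_eq_integral_Ioc, ← intervalIntegral.integral_of_le hnM]
    rw [← h2] at h1
    push_cast at h1
    have h3 : (n : ℂ) ^ (-s) = (M : ℂ) ^ (-s)
        + s * ∫ x in Set.Ioc N M, (Set.Icc (n : ℝ) M).indicator g x := by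
      linear_combination -h1
    rw [h3, MeasureTheory.integral_mul_const]
    ring
  set A := (Finset.Ioc ⌊N⌋₊ ⌊M⌋₊).filter pred with hA_def
  have hswap : ∑ n ∈ A, ∫ x in Set.Ioc N M, ((Set.Icc (n : ℝ) M).indicator g x * a n)
      = ∫ x in Set.Ioc N M, ∑ n ∈ A, (Set.Icc (n : ℝ) M).indicator g x * a n :=
    (integral_finset_sum A (fun n _ =>
      ((hgInt.indicator measurableSet_Icc).mul_const (a n)))).symm
  have hpt : ∀ x ∈ Set.Ioc N M,
      ∑ n ∈ A, (Set.Icc (n : ℝ) M).indicator g x * a n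
        = ((∑ n ∈ (Finset.Icc 1 ⌊x⌋₊).filter pred, a n)
            - ∑ n ∈ (Finset.Icc 1 ⌊N⌋₊).filter pred, a n) * (x : ℂ) ^ (-s - 1) := by
    intro x hx
    have h4 : ∀ n : ℕ, (Set.Icc (n : ℝ) M).indicator g x * a n
        = if (n : ℝ) ≤ x then a n * g x else 0 := by
      intro n
      rw [Set.indicator_apply]
      by_cases h : (n : ℝ) ≤ x
      · simp [Set.mem_Icc, h, hx.2, mul_comm]
      · simp [Set.mem_Icc, h]
    calc ∑ n ∈ A, (Set.Icc (n : ℝ) M).indicator g x * a n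
        = ∑ n ∈ A, if (n : ℝ) ≤ x then a n * g x else 0 := Finset.sum_congr rfl fun n _ => h4 n
      _ = ∑ n ∈ A.filter (fun n : ℕ => (n : ℝ) ≤ x), a n * g x := (Finset.sum_filter _ _).symm
      _ = (∑ n ∈ A.filter (fun n : ℕ => (n : ℝ) ≤ x), a n) * g x := by rw [Finset.sum_mul]
      _ = _ := by rw [hA_def, sum_split a pred hN3 hx.1.le hx.2]
  have hsumM : ∑ n ∈ A, a n
      = (∑ n ∈ (Finset.Icc 1 ⌊M⌋₊).filter pred, a n)
        - ∑ n ∈ (Finset.Icc 1 ⌊N⌋₊).filter pred, a n := by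
    rw [← sum_split a pred hN3 hNM.le le_rfl]
    congr 1
    rw [Finset.filter_true_of_mem]
    intro n hn
    simp only [hA_def, Finset.mem_filter, Finset.mem_Ioc] at hn
    exact le_trans (Nat.cast_le.2 hn.1.2) (Nat.floor_le hM0.le)
  calc ∑ n ∈ A, a n * (n : ℂ) ^ (-s)
      = ∑ n ∈ A, (a n * (M : ℂ) ^ (-s)
          + s * ∫ x in Set.Ioc N M, ((Set.Icc (n : ℝ) M).indicator g x * a n)) :=
        Finset.sum_congr rfl hterm
    _ = (∑ n ∈ A, a n) * (M : ℂ) ^ (-s)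
        + s * ∑ n ∈ A, ∫ x in Set.Ioc N M, ((Set.Icc (n : ℝ) M).indicator g x * a n) := by
        rw [Finset.sum_add_distrib, Finset.sum_mul, Finset.mul_sum]
    _ = _ := by
        rw [hswap, hsumM, setIntegral_congr_fun measurableSet_Ioc hpt]

/-- `n ↦ n^{iγ}` as an arithmetic function. -/
def nPowI (γ : ℝ) : ArithmeticFunction ℂ :=
  ⟨fun n => if n = 0 then 0 else (n : ℂ) ^ (Complex.I * γ), by simp⟩

/-- `τ_Γ(n) = ∑_{d₁⋯d_m = n} d₁^{iγ₁}⋯d_m^{iγ_m}` for a multiset `Γ = {γ₁,…,γ_m}`,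
obtained as the Dirichlet product of the functions `n ↦ n^{iγ}`, `γ ∈ Γ`. -/
def tauGamma (Γ : Multiset ℝ) : ℕ → ℂ :=
  fun n => ((Γ.map nPowI).prod : ArithmeticFunction ℂ) n

/-- `f_Γ = f ∗ τ_Γ`. -/
def fGamma (f : ℕ → ℂ) (Γ : Multiset ℝ) : ℕ → ℂ := dirConv f (tauGamma Γ)

set_option maxHeartbeats 1000000 in
theorem tails_of_dirichlet_series (D m : ℕ) (ε δ C₀ : ℝ)
    (hε : 0 < ε) (hδ : 0 < δ) (hδ1 : δ < 1) (hC₀ : 0 < C₀) :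
    ∃ C : ℝ, 0 < C ∧
      ∀ z : ℝ, 2 ≤ z →
      ∀ Γ : Multiset ℝ, Multiset.card Γ = m →
      ∀ f : ℕ → ℂ, ∀ A : ℝ, (m : ℝ) + 1 + ε ≤ A →
        (∀ x : ℝ, z ≤ x →
          ‖∑ n ∈ (Finset.Icc 1 ⌊x⌋₊).filter
              (fun n => ∀ p : ℕ, p.Prime → p ∣ n → z < (p : ℝ)), fGamma f Γ n‖
            ≤ C₀ * (x * Real.log z ^ ((D : ℝ) - m) / Real.log x ^ (A - m) +
                x ^ (1 - δ / Real.log z) / Real.log z)) →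
      ∀ N : ℝ, max 3 z ≤ N → ∀ σ : ℝ, 1 ≤ σ → σ ≤ 2 → ∀ t : ℝ, ∀ M : ℝ, N < M →
        ‖∑ n ∈ (Finset.Icc 1 ⌊M⌋₊).filter
            (fun n : ℕ => N < (n : ℝ) ∧ ∀ p : ℕ, p.Prime → p ∣ n → z < (p : ℝ)),
            fGamma f Γ n * (n : ℂ) ^ (-((σ : ℂ) + Complex.I * (t : ℂ)))‖
          ≤ C * (1 + |t|) * N ^ (1 - σ) *
              (Real.log z ^ ((D : ℝ) - m) / Real.log N ^ (A - m - 1) +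
                N ^ (-δ / Real.log z)) := by
  refine ⟨C₀ * (8 + 2 / ε + 2 / δ), by positivity, ?_⟩
  intro z hz Γ hΓ f A hA hS N hN σ hσ1 hσ2 t M hNM
  -- basic facts
  have hN3 : (3:ℝ) ≤ N := le_trans (le_max_left _ _) hN
  have hzN : z ≤ N := le_trans (le_max_right _ _) hN
  have hN0 : (0:ℝ) < N := by linarith
  have hM3 : (3:ℝ) ≤ M := by linarith
  have hM0 : (0:ℝ) < M := by linarith
  have hzM : z ≤ M := by linarith
  have hz0 : (0:ℝ) < z := by linarith
  have hLz0 : (0:ℝ) < Real.log z := Real.log_pos (by linarith)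
  have hLzhalf : (1:ℝ)/2 ≤ Real.log z := by
    have h2 := Real.log_two_gt_d9
    have h3 := Real.log_le_log (by norm_num : (0:ℝ) < 2) hz
    linarith
  have hLN1 : 1 < Real.log N := one_lt_log_of_three_le hN3
  have hLN0 : (0:ℝ) ≤ Real.log N := by linarith
  have hLNM : Real.log N ≤ Real.log M := Real.log_le_log hN0 hNM.le
  have hB1 : 1 + ε ≤ A - (m:ℝ) := by linarith
  have hη0 : 0 < δ / Real.log z := div_pos hδ hLz0
  have hinvLz : 1 / Real.log z ≤ 2 := by rw [div_le_iff₀ hLz0]; linarith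
  -- index-set rewrite
  have hAeq : (Finset.Icc 1 ⌊M⌋₊).filter
        (fun n : ℕ => N < (n : ℝ) ∧ ∀ p : ℕ, p.Prime → p ∣ n → z < (p : ℝ))
      = (Finset.Ioc ⌊N⌋₊ ⌊M⌋₊).filter
        (fun n : ℕ => ∀ p : ℕ, p.Prime → p ∣ n → z < (p : ℝ)) := by
    ext n
    simp only [Finset.mem_filter, Finset.mem_Icc, Finset.mem_Ioc]
    constructor
    · rintro ⟨⟨h1, h2⟩, h3, h4⟩
      exact ⟨⟨(Nat.floor_lt hN0.le).2 h3, h2⟩, h4⟩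
    · rintro ⟨⟨h1, h2⟩, h4⟩
      have h3 : N < (n:ℝ) := (Nat.floor_lt hN0.le).1 h1
      have hn1 : 1 ≤ n := by
        rcases Nat.eq_zero_or_pos n with h | h
        · exfalso; rw [h] at h3; push_cast at h3; linarith
        · exact h
      exact ⟨⟨hn1, h2⟩, h3, h4⟩
  rw [hAeq]
  set s : ℂ := (σ:ℂ) + Complex.I * (t:ℂ) with hs_def
  have hs_re : s.re = σ := by rw [hs_def]; simp
  have hs0 : s ≠ 0 := by
    intro h
    rw [h] at hs_re
    simp at hs_re
    linarith
  have hsnorm : ‖s‖ ≤ 2 * (1 + |t|) := by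
    have h1 : ‖s‖ ≤ ‖(σ:ℂ)‖ + ‖Complex.I * (t:ℂ)‖ := norm_add_le _ _
    have h2 : ‖(σ:ℂ)‖ = |σ| := by simp
    have h3 : ‖Complex.I * (t:ℂ)‖ = |t| := by simp
    have h4 : |σ| ≤ 2 := by rw [abs_of_pos (by linarith : (0:ℝ) < σ)]; linarith
    have h5 : (0:ℝ) ≤ |t| := abs_nonneg t
    rw [h2, h3] at h1
    linarith
  rw [main_identity (fGamma f Γ) _ hs0 hN3 hNM]
  -- norms of powers
  have hnormM : ‖(M:ℂ) ^ (-s)‖ = M ^ (-σ) := by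
    rw [Complex.norm_cpow_eq_rpow_re_of_pos hM0]
    congr 1
    rw [Complex.neg_re, hs_re]
  have hnormx : ∀ x : ℝ, 0 < x → ‖(x:ℂ) ^ (-s - 1)‖ = x ^ (-σ - 1) := by
    intro x hx
    rw [Complex.norm_cpow_eq_rpow_re_of_pos hx]
    congr 1
    rw [Complex.sub_re, Complex.neg_re, hs_re, Complex.one_re]

  -- paren rewrite in the goal
  have hpar : Real.log z ^ ((D:ℝ) - m) / Real.log N ^ (A - (m:ℝ) - 1)
      = Real.log z ^ ((D:ℝ) - m) * Real.log N ^ (1 - (A - (m:ℝ))) := by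
    rw [show (1 - (A - (m:ℝ))) = -(A - (m:ℝ) - 1) by ring, Real.rpow_neg hLN0, div_eq_mul_inv]
  rw [hpar, neg_div]
  -- continuity facts
  have hlogpos : ∀ x ∈ Set.Icc N M, (0:ℝ) < Real.log x :=
    fun x hx => lt_trans one_pos (one_lt_log_of_three_le (le_trans hN3 hx.1))
  have hden : ∀ x ∈ Set.Icc N M, Real.log x ^ (A - (m:ℝ)) ≠ 0 :=
    fun x hx => (Real.rpow_pos_of_pos (hlogpos x hx) _).ne'
  have hSBcont : ContinuousOn (fun y : ℝ =>
      C₀ * (y * Real.log z ^ ((D:ℝ) - m) / Real.log y ^ (A - (m:ℝ))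
        + y ^ (1 - δ / Real.log z) / Real.log z)) (Set.Icc N M) :=
    continuousOn_const.mul
      ((((continuousOn_id.mul continuousOn_const).div (myContOn_logrpow _ hN3) hden)).add
        ((myContOn_rpow (1 - δ / Real.log z) hN0).div_const (Real.log z)))
  have hII : ∀ F : ℝ → ℝ, ContinuousOn F (Set.Icc N M) → IntervalIntegrable F volume N M := by
    intro F hF
    exact ContinuousOn.intervalIntegrable (by rw [Set.uIcc_of_le hNM.le]; exact hF)
  have hinvlogcont : ContinuousOn (fun x : ℝ => x⁻¹ * Real.log x ^ (-(A - (m:ℝ)))) (Set.Icc N M) :=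
    (continuousOn_id.inv₀ (fun x hx => ne_of_gt (lt_of_lt_of_le hN0 hx.1))).mul
      (myContOn_logrpow _ hN3)
  -- nonnegativity of the bound function
  have hSBnn : ∀ y : ℝ, 3 ≤ y →
      0 ≤ C₀ * (y * Real.log z ^ ((D:ℝ) - m) / Real.log y ^ (A - (m:ℝ))
        + y ^ (1 - δ / Real.log z) / Real.log z) := by
    intro y hy
    have hly : (0:ℝ) ≤ Real.log y := by linarith [one_lt_log_of_three_le hy]
    apply mul_nonneg hC₀.le
    apply add_nonneg
    · exact div_nonneg (mul_nonneg (by linarith) (Real.rpow_nonneg hLz0.le _))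
        (Real.rpow_nonneg hly _)
    · exact div_nonneg (Real.rpow_nonneg (by linarith) _) hLz0.le
  -- nonnegativity of the target quantity
  have hK1nn : (0:ℝ) ≤ Real.log z ^ ((D:ℝ) - m) * Real.log N ^ (1 - (A - (m:ℝ))) :=
    mul_nonneg (Real.rpow_nonneg hLz0.le _) (Real.rpow_nonneg hLN0 _)
  have hK2nn : (0:ℝ) ≤ N ^ (-(δ / Real.log z)) := Real.rpow_nonneg hN0.le _
  have hRnn : (0:ℝ) ≤ N ^ (1 - σ) := Real.rpow_nonneg hN0.le _
  have hQnn : (0:ℝ) ≤ C₀ * (N ^ (1 - σ) * (Real.log z ^ ((D:ℝ) - m)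
      * Real.log N ^ (1 - (A - (m:ℝ))) + N ^ (-(δ / Real.log z)))) :=
    mul_nonneg hC₀.le (mul_nonneg hRnn (add_nonneg hK1nn hK2nn))
  -- the generic bound  SB y * y^(-σ) ≤ 2 Q  for y ≥ N
  have hgen : ∀ y : ℝ, N ≤ y →
      C₀ * (y * Real.log z ^ ((D:ℝ) - m) / Real.log y ^ (A - (m:ℝ))
        + y ^ (1 - δ / Real.log z) / Real.log z) * y ^ (-σ)
      ≤ 2 * (C₀ * (N ^ (1 - σ) * (Real.log z ^ ((D:ℝ) - m)
          * Real.log N ^ (1 - (A - (m:ℝ))) + N ^ (-(δ / Real.log z))))) := by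
    intro y hy
    have hy0 : (0:ℝ) < y := lt_of_lt_of_le hN0 hy
    have hy3 : (3:ℝ) ≤ y := le_trans hN3 hy
    have hly1 : 1 < Real.log y := one_lt_log_of_three_le hy3
    have hly0 : (0:ℝ) ≤ Real.log y := by linarith
    have hlNy : Real.log N ≤ Real.log y := Real.log_le_log hN0 hy
    have e1 : y ^ (1 - σ) = y ^ (-σ) * y := by
      rw [show (1 - σ) = -σ + 1 by ring, Real.rpow_add_one hy0.ne']
    have e2 : y ^ (1 - δ / Real.log z) * y ^ (-σ)
        = y ^ (1 - σ) * y ^ (-(δ / Real.log z)) := by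
      rw [← Real.rpow_add hy0, ← Real.rpow_add hy0]; congr 1; ring
    have e3 : Real.log y ^ (-(A - (m:ℝ))) = (Real.log y ^ (A - (m:ℝ)))⁻¹ :=
      Real.rpow_neg hly0 _
    have b1 : y ^ (1 - σ) ≤ N ^ (1 - σ) :=
      Real.rpow_le_rpow_of_nonpos hN0 hy (by linarith)
    have b2 : Real.log y ^ (-(A - (m:ℝ))) ≤ Real.log N ^ (1 - (A - (m:ℝ))) := by
      refine le_trans (Real.rpow_le_rpow_of_nonpos (by linarith : (0:ℝ) < Real.log N) hlNy
        (by linarith : -(A - (m:ℝ)) ≤ 0)) ?_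
      exact Real.rpow_le_rpow_of_exponent_le hLN1.le (by linarith)
    have b3 : y ^ (-(δ / Real.log z)) ≤ N ^ (-(δ / Real.log z)) :=
      Real.rpow_le_rpow_of_nonpos hN0 hy (by linarith)
    have term1 : y * Real.log z ^ ((D:ℝ) - m) / Real.log y ^ (A - (m:ℝ)) * y ^ (-σ)
        = Real.log z ^ ((D:ℝ) - m) * (y ^ (1 - σ) * Real.log y ^ (-(A - (m:ℝ)))) := by
      calc y * Real.log z ^ ((D:ℝ) - m) / Real.log y ^ (A - (m:ℝ)) * y ^ (-σ)
          = Real.log z ^ ((D:ℝ) - m) * (y ^ (-σ) * y) * (Real.log y ^ (A - (m:ℝ)))⁻¹ := by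
            rw [div_eq_mul_inv]; ring
        _ = Real.log z ^ ((D:ℝ) - m) * y ^ (1 - σ) * (Real.log y ^ (A - (m:ℝ)))⁻¹ := by
            rw [← e1]
        _ = Real.log z ^ ((D:ℝ) - m) * (y ^ (1 - σ) * Real.log y ^ (-(A - (m:ℝ)))) := by
            rw [e3]; ring
    have term2 : y ^ (1 - δ / Real.log z) / Real.log z * y ^ (-σ)
        = 1 / Real.log z * (y ^ (1 - σ) * y ^ (-(δ / Real.log z))) := by
      calc y ^ (1 - δ / Real.log z) / Real.log z * y ^ (-σ)
          = 1 / Real.log z * (y ^ (1 - δ / Real.log z) * y ^ (-σ)) := by ring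
        _ = 1 / Real.log z * (y ^ (1 - σ) * y ^ (-(δ / Real.log z))) := by rw [e2]
    have lhs_eq : C₀ * (y * Real.log z ^ ((D:ℝ) - m) / Real.log y ^ (A - (m:ℝ))
          + y ^ (1 - δ / Real.log z) / Real.log z) * y ^ (-σ)
        = C₀ * (Real.log z ^ ((D:ℝ) - m) * (y ^ (1 - σ) * Real.log y ^ (-(A - (m:ℝ))))
            + 1 / Real.log z * (y ^ (1 - σ) * y ^ (-(δ / Real.log z)))) := by
      rw [← term1, ← term2]; ring
    rw [lhs_eq]
    have p1 : y ^ (1 - σ) * Real.log y ^ (-(A - (m:ℝ)))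
        ≤ N ^ (1 - σ) * Real.log N ^ (1 - (A - (m:ℝ))) :=
      mul_le_mul b1 b2 (Real.rpow_nonneg hly0 _) hRnn
    have p2 : y ^ (1 - σ) * y ^ (-(δ / Real.log z))
        ≤ N ^ (1 - σ) * N ^ (-(δ / Real.log z)) :=
      mul_le_mul b1 b3 (Real.rpow_nonneg hy0.le _) hRnn
    have q1 : Real.log z ^ ((D:ℝ) - m) * (y ^ (1 - σ) * Real.log y ^ (-(A - (m:ℝ))))
        ≤ Real.log z ^ ((D:ℝ) - m) * (N ^ (1 - σ) * Real.log N ^ (1 - (A - (m:ℝ)))) :=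
      mul_le_mul_of_nonneg_left p1 (Real.rpow_nonneg hLz0.le _)
    have q2 : 1 / Real.log z * (y ^ (1 - σ) * y ^ (-(δ / Real.log z)))
        ≤ 2 * (N ^ (1 - σ) * N ^ (-(δ / Real.log z))) :=
      mul_le_mul hinvLz p2
        (mul_nonneg (Real.rpow_nonneg hy0.le _) (Real.rpow_nonneg hy0.le _)) (by norm_num)
    have hfin1 := mul_le_mul_of_nonneg_left (add_le_add q1 q2) hC₀.le
    have hfin2 : (0:ℝ) ≤ C₀ * (Real.log z ^ ((D:ℝ) - m)
        * (N ^ (1 - σ) * Real.log N ^ (1 - (A - (m:ℝ))))) :=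
      mul_nonneg hC₀.le (mul_nonneg (Real.rpow_nonneg hLz0.le _)
        (mul_nonneg hRnn (Real.rpow_nonneg hLN0 _)))
    linarith

  -- pointwise bound on the integrand
  have hptb : ∀ x ∈ Set.Icc N M,
      C₀ * (x * Real.log z ^ ((D:ℝ) - m) / Real.log x ^ (A - (m:ℝ))
        + x ^ (1 - δ / Real.log z) / Real.log z) * x ^ (-σ - 1)
      ≤ C₀ * Real.log z ^ ((D:ℝ) - m) * N ^ (1 - σ)
          * (x⁻¹ * Real.log x ^ (-(A - (m:ℝ))))
        + C₀ / Real.log z * N ^ (1 - σ) * x ^ (-1 - δ / Real.log z) := by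
    intro x hx
    have hx0 : (0:ℝ) < x := lt_of_lt_of_le hN0 hx.1
    have hlx0 : (0:ℝ) ≤ Real.log x := (hlogpos x hx).le
    have e1 : x ^ (-σ - 1) * x = x ^ (-σ) := by
      rw [← Real.rpow_add_one hx0.ne' (-σ - 1)]
      congr 1
      ring
    have e2 : x ^ (1 - σ) * x ^ (-(1:ℝ)) = x ^ (-σ) := by
      rw [← Real.rpow_add hx0]; congr 1; ring
    have e3 : x ^ (1 - δ / Real.log z) * x ^ (-σ - 1)
        = x ^ (1 - σ) * x ^ (-1 - δ / Real.log z) := by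
      rw [← Real.rpow_add hx0, ← Real.rpow_add hx0]; congr 1; ring
    have e4 : x ^ (-(1:ℝ)) = x⁻¹ := Real.rpow_neg_one x
    have e5 : Real.log x ^ (-(A - (m:ℝ))) = (Real.log x ^ (A - (m:ℝ)))⁻¹ :=
      Real.rpow_neg hlx0 _
    have b1 : x ^ (1 - σ) ≤ N ^ (1 - σ) :=
      Real.rpow_le_rpow_of_nonpos hN0 hx.1 (by linarith)
    have term1 : x * Real.log z ^ ((D:ℝ) - m) / Real.log x ^ (A - (m:ℝ)) * x ^ (-σ - 1)
        = Real.log z ^ ((D:ℝ) - m) * x ^ (1 - σ)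
            * (x⁻¹ * Real.log x ^ (-(A - (m:ℝ)))) := by
      calc x * Real.log z ^ ((D:ℝ) - m) / Real.log x ^ (A - (m:ℝ)) * x ^ (-σ - 1)
          = Real.log z ^ ((D:ℝ) - m) * (x ^ (-σ - 1) * x)
              * (Real.log x ^ (A - (m:ℝ)))⁻¹ := by rw [div_eq_mul_inv]; ring
        _ = Real.log z ^ ((D:ℝ) - m) * x ^ (-σ) * (Real.log x ^ (A - (m:ℝ)))⁻¹ := by
            rw [e1]
        _ = Real.log z ^ ((D:ℝ) - m) * (x ^ (1 - σ) * x ^ (-(1:ℝ)))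
              * (Real.log x ^ (A - (m:ℝ)))⁻¹ := by rw [e2]
        _ = Real.log z ^ ((D:ℝ) - m) * x ^ (1 - σ)
              * (x⁻¹ * Real.log x ^ (-(A - (m:ℝ)))) := by rw [e4, e5]; ring
    have term2 : x ^ (1 - δ / Real.log z) / Real.log z * x ^ (-σ - 1)
        = 1 / Real.log z * (x ^ (1 - σ) * x ^ (-1 - δ / Real.log z)) := by
      calc x ^ (1 - δ / Real.log z) / Real.log z * x ^ (-σ - 1)
          = 1 / Real.log z * (x ^ (1 - δ / Real.log z) * x ^ (-σ - 1)) := by ring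
        _ = 1 / Real.log z * (x ^ (1 - σ) * x ^ (-1 - δ / Real.log z)) := by rw [e3]
    have lhs_eq : C₀ * (x * Real.log z ^ ((D:ℝ) - m) / Real.log x ^ (A - (m:ℝ))
          + x ^ (1 - δ / Real.log z) / Real.log z) * x ^ (-σ - 1)
        = C₀ * (Real.log z ^ ((D:ℝ) - m) * x ^ (1 - σ)
              * (x⁻¹ * Real.log x ^ (-(A - (m:ℝ)))))
          + C₀ * (1 / Real.log z * (x ^ (1 - σ) * x ^ (-1 - δ / Real.log z))) := by
      rw [← term1, ← term2]; ring
    rw [lhs_eq]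
    have q1 : Real.log z ^ ((D:ℝ) - m) * x ^ (1 - σ)
          * (x⁻¹ * Real.log x ^ (-(A - (m:ℝ))))
        ≤ Real.log z ^ ((D:ℝ) - m) * N ^ (1 - σ)
          * (x⁻¹ * Real.log x ^ (-(A - (m:ℝ)))) :=
      mul_le_mul_of_nonneg_right
        (mul_le_mul_of_nonneg_left b1 (Real.rpow_nonneg hLz0.le _))
        (mul_nonneg (inv_nonneg.2 hx0.le) (Real.rpow_nonneg hlx0 _))
    have q2 : 1 / Real.log z * (x ^ (1 - σ) * x ^ (-1 - δ / Real.log z))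
        ≤ 1 / Real.log z * (N ^ (1 - σ) * x ^ (-1 - δ / Real.log z)) :=
      mul_le_mul_of_nonneg_left
        (mul_le_mul_of_nonneg_right b1 (Real.rpow_nonneg hx0.le _))
        (div_nonneg zero_le_one hLz0.le)
    have r1 := mul_le_mul_of_nonneg_left q1 hC₀.le
    have r2 := mul_le_mul_of_nonneg_left q2 hC₀.le
    have efin : C₀ * (Real.log z ^ ((D:ℝ) - m) * N ^ (1 - σ)
          * (x⁻¹ * Real.log x ^ (-(A - (m:ℝ)))))
        + C₀ * (1 / Real.log z * (N ^ (1 - σ) * x ^ (-1 - δ / Real.log z)))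
        = C₀ * Real.log z ^ ((D:ℝ) - m) * N ^ (1 - σ)
            * (x⁻¹ * Real.log x ^ (-(A - (m:ℝ))))
          + C₀ / Real.log z * N ^ (1 - σ) * x ^ (-1 - δ / Real.log z) := by
      ring
    linarith
  -- interval integrability of all players
  have hii1 : IntervalIntegrable (fun x : ℝ =>
      C₀ * (x * Real.log z ^ ((D:ℝ) - m) / Real.log x ^ (A - (m:ℝ))
        + x ^ (1 - δ / Real.log z) / Real.log z) * x ^ (-σ - 1)) volume N M :=
    hII _ (hSBcont.mul (myContOn_rpow _ hN0))
  have hii2 : IntervalIntegrable (fun x : ℝ => x ^ (-σ - 1)) volume N M :=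
    hII _ (myContOn_rpow _ hN0)
  have hii3 : IntervalIntegrable (fun x : ℝ => x⁻¹ * Real.log x ^ (-(A - (m:ℝ))))
      volume N M := hII _ hinvlogcont
  have hii4 : IntervalIntegrable (fun x : ℝ => x ^ (-1 - δ / Real.log z)) volume N M :=
    hII _ (myContOn_rpow _ hN0)
  have hiiR : IntervalIntegrable (fun x : ℝ =>
      C₀ * Real.log z ^ ((D:ℝ) - m) * N ^ (1 - σ)
          * (x⁻¹ * Real.log x ^ (-(A - (m:ℝ))))
        + C₀ / Real.log z * N ^ (1 - σ) * x ^ (-1 - δ / Real.log z)) volume N M :=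
    (hii3.const_mul _).add (hii4.const_mul _)
  -- elementary integral bounds
  have h0uIcc : (0:ℝ) ∉ Set.uIcc N M := by
    rw [Set.uIcc_of_le hNM.le]
    intro h
    linarith [h.1]
  have hne1 : -σ - 1 ≠ (-1:ℝ) := by intro h; linarith
  have hne4 : -1 - δ / Real.log z ≠ (-1:ℝ) := by intro h; linarith [hη0]
  have hI1 : ∫ x in N..M, x ^ (-σ - 1) ≤ N ^ (-σ) := by
    rw [integral_rpow (Or.inr ⟨hne1, h0uIcc⟩)]
    rw [show -σ - 1 + 1 = -σ by ring]
    rw [div_le_iff_of_neg (by linarith : -σ < 0)]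
    nlinarith [Real.rpow_nonneg hM0.le (-σ), Real.rpow_nonneg hN0.le (-σ),
      mul_nonneg (Real.rpow_nonneg hN0.le (-σ)) (by linarith : (0:ℝ) ≤ σ - 1)]
  have hI4 : ∫ x in N..M, x ^ (-1 - δ / Real.log z)
      ≤ N ^ (-(δ / Real.log z)) * (Real.log z / δ) := by
    rw [integral_rpow (Or.inr ⟨hne4, h0uIcc⟩)]
    rw [show -1 - δ / Real.log z + 1 = -(δ / Real.log z) by ring]
    rw [div_le_iff_of_neg (by linarith : -(δ / Real.log z) < 0)]
    have heq : N ^ (-(δ / Real.log z)) * (Real.log z / δ) * -(δ / Real.log z)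
        = -N ^ (-(δ / Real.log z)) := by
      field_simp
    rw [heq]
    linarith [Real.rpow_nonneg hM0.le (-(δ / Real.log z))]
  have hI2 : ∫ x in N..M, x⁻¹ * Real.log x ^ (-(A - (m:ℝ)))
      ≤ Real.log N ^ (1 - (A - (m:ℝ))) / ε := by
    refine le_trans (aux_integral_inv_log_rpow (by linarith : 1 < A - (m:ℝ)) hN3 hNM.le) ?_
    rw [div_le_div_iff₀ (by linarith : (0:ℝ) < A - (m:ℝ) - 1) hε]
    have := Real.rpow_nonneg hLN0 (1 - (A - (m:ℝ)))
    nlinarith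
  -- the total integral bound
  have hItot : ∫ x in Set.Ioc N M,
      (C₀ * (x * Real.log z ^ ((D:ℝ) - m) / Real.log x ^ (A - (m:ℝ))
          + x ^ (1 - δ / Real.log z) / Real.log z)
        + C₀ * (N * Real.log z ^ ((D:ℝ) - m) / Real.log N ^ (A - (m:ℝ))
          + N ^ (1 - δ / Real.log z) / Real.log z)) * x ^ (-σ - 1)
      ≤ (1 / ε + 1 / δ + 2) * (C₀ * (N ^ (1 - σ) * (Real.log z ^ ((D:ℝ) - m)
          * Real.log N ^ (1 - (A - (m:ℝ))) + N ^ (-(δ / Real.log z))))) := by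
    rw [← intervalIntegral.integral_of_le hNM.le]
    have hsplit : ∫ x in N..M,
        (C₀ * (x * Real.log z ^ ((D:ℝ) - m) / Real.log x ^ (A - (m:ℝ))
            + x ^ (1 - δ / Real.log z) / Real.log z)
          + C₀ * (N * Real.log z ^ ((D:ℝ) - m) / Real.log N ^ (A - (m:ℝ))
            + N ^ (1 - δ / Real.log z) / Real.log z)) * x ^ (-σ - 1)
        = (∫ x in N..M,
            C₀ * (x * Real.log z ^ ((D:ℝ) - m) / Real.log x ^ (A - (m:ℝ))
              + x ^ (1 - δ / Real.log z) / Real.log z) * x ^ (-σ - 1))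
          + C₀ * (N * Real.log z ^ ((D:ℝ) - m) / Real.log N ^ (A - (m:ℝ))
              + N ^ (1 - δ / Real.log z) / Real.log z) * ∫ x in N..M, x ^ (-σ - 1) := by
      rw [← intervalIntegral.integral_const_mul, ← intervalIntegral.integral_add hii1
        (hii2.const_mul _)]
      congr 1
      funext x
      ring
    rw [hsplit]
    -- bound the main integral
    have hmain : ∫ x in N..M,
        C₀ * (x * Real.log z ^ ((D:ℝ) - m) / Real.log x ^ (A - (m:ℝ))
          + x ^ (1 - δ / Real.log z) / Real.log z) * x ^ (-σ - 1)
        ≤ C₀ * Real.log z ^ ((D:ℝ) - m) * N ^ (1 - σ)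
            * (Real.log N ^ (1 - (A - (m:ℝ))) / ε)
          + C₀ / Real.log z * N ^ (1 - σ) * (N ^ (-(δ / Real.log z)) * (Real.log z / δ)) := by
      refine le_trans (intervalIntegral.integral_mono_on hNM.le hii1 hiiR hptb) ?_
      rw [intervalIntegral.integral_add (hii3.const_mul _) (hii4.const_mul _),
        intervalIntegral.integral_const_mul, intervalIntegral.integral_const_mul]
      have c1 : (0:ℝ) ≤ C₀ * Real.log z ^ ((D:ℝ) - m) * N ^ (1 - σ) :=
        mul_nonneg (mul_nonneg hC₀.le (Real.rpow_nonneg hLz0.le _)) hRnn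
      have c2 : (0:ℝ) ≤ C₀ / Real.log z * N ^ (1 - σ) :=
        mul_nonneg (div_nonneg hC₀.le hLz0.le) hRnn
      exact add_le_add (mul_le_mul_of_nonneg_left hI2 c1) (mul_le_mul_of_nonneg_left hI4 c2)
    -- convert the two main terms into multiples of Q
    have hq1 : C₀ * Real.log z ^ ((D:ℝ) - m) * N ^ (1 - σ)
          * (Real.log N ^ (1 - (A - (m:ℝ))) / ε)
        ≤ 1 / ε * (C₀ * (N ^ (1 - σ) * (Real.log z ^ ((D:ℝ) - m)
            * Real.log N ^ (1 - (A - (m:ℝ))) + N ^ (-(δ / Real.log z))))) := by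
      rw [show C₀ * Real.log z ^ ((D:ℝ) - m) * N ^ (1 - σ)
            * (Real.log N ^ (1 - (A - (m:ℝ))) / ε)
          = 1 / ε * (C₀ * (N ^ (1 - σ) * (Real.log z ^ ((D:ℝ) - m)
              * Real.log N ^ (1 - (A - (m:ℝ)))))) by ring]
      apply mul_le_mul_of_nonneg_left _ (by positivity)
      have := mul_nonneg (mul_nonneg hC₀.le hRnn) hK2nn
      nlinarith
    have hq2 : C₀ / Real.log z * N ^ (1 - σ)
          * (N ^ (-(δ / Real.log z)) * (Real.log z / δ))
        ≤ 1 / δ * (C₀ * (N ^ (1 - σ) * (Real.log z ^ ((D:ℝ) - m)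
            * Real.log N ^ (1 - (A - (m:ℝ))) + N ^ (-(δ / Real.log z))))) := by
      have heq2 : C₀ / Real.log z * N ^ (1 - σ)
            * (N ^ (-(δ / Real.log z)) * (Real.log z / δ))
          = 1 / δ * (C₀ * (N ^ (1 - σ) * N ^ (-(δ / Real.log z)))) := by
        field_simp
      rw [heq2]
      apply mul_le_mul_of_nonneg_left _ (by positivity)
      have := mul_nonneg (mul_nonneg hC₀.le hRnn) hK1nn
      nlinarith
    -- bound the boundary term
    have hq3 : C₀ * (N * Real.log z ^ ((D:ℝ) - m) / Real.log N ^ (A - (m:ℝ))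
          + N ^ (1 - δ / Real.log z) / Real.log z) * ∫ x in N..M, x ^ (-σ - 1)
        ≤ 2 * (C₀ * (N ^ (1 - σ) * (Real.log z ^ ((D:ℝ) - m)
            * Real.log N ^ (1 - (A - (m:ℝ))) + N ^ (-(δ / Real.log z))))) := by
      refine le_trans (mul_le_mul_of_nonneg_left hI1 (hSBnn N hN3)) (hgen N le_rfl)
    linarith

  have hboundcont : ContinuousOn (fun x : ℝ =>
      (C₀ * (x * Real.log z ^ ((D:ℝ) - m) / Real.log x ^ (A - (m:ℝ))
          + x ^ (1 - δ / Real.log z) / Real.log z)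
        + C₀ * (N * Real.log z ^ ((D:ℝ) - m) / Real.log N ^ (A - (m:ℝ))
          + N ^ (1 - δ / Real.log z) / Real.log z)) * x ^ (-σ - 1)) (Set.Icc N M) :=
    (hSBcont.add continuousOn_const).mul (myContOn_rpow _ hN0)
  have hIntBound : IntegrableOn (fun x : ℝ =>
      (C₀ * (x * Real.log z ^ ((D:ℝ) - m) / Real.log x ^ (A - (m:ℝ))
          + x ^ (1 - δ / Real.log z) / Real.log z)
        + C₀ * (N * Real.log z ^ ((D:ℝ) - m) / Real.log N ^ (A - (m:ℝ))
          + N ^ (1 - δ / Real.log z) / Real.log z)) * x ^ (-σ - 1)) (Set.Ioc N M) volume :=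
    hboundcont.integrableOn_Icc.mono_set Set.Ioc_subset_Icc_self
  have hnormint : ‖∫ x in Set.Ioc N M,
        (((∑ n ∈ (Finset.Icc 1 ⌊x⌋₊).filter
            (fun n : ℕ => ∀ p : ℕ, p.Prime → p ∣ n → z < (p : ℝ)), fGamma f Γ n)
          - ∑ n ∈ (Finset.Icc 1 ⌊N⌋₊).filter
            (fun n : ℕ => ∀ p : ℕ, p.Prime → p ∣ n → z < (p : ℝ)), fGamma f Γ n)
          * (x : ℂ) ^ (-s - 1))‖
      ≤ ∫ x in Set.Ioc N M, (C₀ * (x * Real.log z ^ ((D:ℝ) - m) / Real.log x ^ (A - (m:ℝ))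
          + x ^ (1 - δ / Real.log z) / Real.log z)
        + C₀ * (N * Real.log z ^ ((D:ℝ) - m) / Real.log N ^ (A - (m:ℝ))
          + N ^ (1 - δ / Real.log z) / Real.log z)) * x ^ (-σ - 1) := by
    apply MeasureTheory.norm_integral_le_of_norm_le hIntBound
    refine (ae_restrict_iff' measurableSet_Ioc).2 (Filter.Eventually.of_forall ?_)
    intro x hx
    rw [norm_mul, hnormx x (lt_trans hN0 hx.1)]
    apply mul_le_mul_of_nonneg_right _ (Real.rpow_nonneg (le_of_lt (lt_trans hN0 hx.1)) _)
    exact le_trans (norm_sub_le _ _) (add_le_add (hS x (by linarith [hx.1])) (hS N hzN))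
  have hXb : ‖((∑ n ∈ (Finset.Icc 1 ⌊M⌋₊).filter
            (fun n : ℕ => ∀ p : ℕ, p.Prime → p ∣ n → z < (p : ℝ)), fGamma f Γ n)
        - ∑ n ∈ (Finset.Icc 1 ⌊N⌋₊).filter
            (fun n : ℕ => ∀ p : ℕ, p.Prime → p ∣ n → z < (p : ℝ)), fGamma f Γ n) * (M:ℂ) ^ (-s)‖
      ≤ (C₀ * (M * Real.log z ^ ((D:ℝ) - m) / Real.log M ^ (A - (m:ℝ))
          + M ^ (1 - δ / Real.log z) / Real.log z)
        + C₀ * (N * Real.log z ^ ((D:ℝ) - m) / Real.log N ^ (A - (m:ℝ))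
          + N ^ (1 - δ / Real.log z) / Real.log z)) * M ^ (-σ) := by
    rw [norm_mul, hnormM]
    exact mul_le_mul_of_nonneg_right
      (le_trans (norm_sub_le _ _) (add_le_add (hS M hzM) (hS N hzN)))
      (Real.rpow_nonneg hM0.le _)
  have hYb : ‖s * ∫ x in Set.Ioc N M,
        (((∑ n ∈ (Finset.Icc 1 ⌊x⌋₊).filter
            (fun n : ℕ => ∀ p : ℕ, p.Prime → p ∣ n → z < (p : ℝ)), fGamma f Γ n)
          - ∑ n ∈ (Finset.Icc 1 ⌊N⌋₊).filter
            (fun n : ℕ => ∀ p : ℕ, p.Prime → p ∣ n → z < (p : ℝ)), fGamma f Γ n)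
          * (x : ℂ) ^ (-s - 1))‖
      ≤ ‖s‖ * ∫ x in Set.Ioc N M, (C₀ * (x * Real.log z ^ ((D:ℝ) - m) / Real.log x ^ (A - (m:ℝ))
          + x ^ (1 - δ / Real.log z) / Real.log z)
        + C₀ * (N * Real.log z ^ ((D:ℝ) - m) / Real.log N ^ (A - (m:ℝ))
          + N ^ (1 - δ / Real.log z) / Real.log z)) * x ^ (-σ - 1) := by
    rw [norm_mul]
    exact mul_le_mul_of_nonneg_left hnormint (norm_nonneg s)
  have hMσ : M ^ (-σ) ≤ N ^ (-σ) := Real.rpow_le_rpow_of_nonpos hN0 hNM.le (by linarith)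
  have hgenM := hgen M hNM.le
  have hgenN := hgen N le_rfl
  have hcross : (C₀ * (N * Real.log z ^ ((D:ℝ) - m) / Real.log N ^ (A - (m:ℝ))
          + N ^ (1 - δ / Real.log z) / Real.log z)) * M ^ (-σ)
      ≤ (C₀ * (N * Real.log z ^ ((D:ℝ) - m) / Real.log N ^ (A - (m:ℝ))
          + N ^ (1 - δ / Real.log z) / Real.log z)) * N ^ (-σ) :=
    mul_le_mul_of_nonneg_left hMσ (hSBnn N hN3)
  have hQQnn : (0:ℝ) ≤ (1 / ε + 1 / δ + 2) * (C₀ * (N ^ (1 - σ) * (Real.log z ^ ((D:ℝ) - m)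
      * Real.log N ^ (1 - (A - (m:ℝ))) + N ^ (-(δ / Real.log z))))) :=
    mul_nonneg (by positivity) hQnn
  have hYc : ‖s‖ * (∫ x in Set.Ioc N M, (C₀ * (x * Real.log z ^ ((D:ℝ) - m) / Real.log x ^ (A - (m:ℝ))
          + x ^ (1 - δ / Real.log z) / Real.log z)
        + C₀ * (N * Real.log z ^ ((D:ℝ) - m) / Real.log N ^ (A - (m:ℝ))
          + N ^ (1 - δ / Real.log z) / Real.log z)) * x ^ (-σ - 1))
      ≤ 2 * (1 + |t|) * ((1 / ε + 1 / δ + 2) * (C₀ * (N ^ (1 - σ) * (Real.log z ^ ((D:ℝ) - m)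
      * Real.log N ^ (1 - (A - (m:ℝ))) + N ^ (-(δ / Real.log z)))))) :=
    le_trans (mul_le_mul_of_nonneg_left hItot (norm_nonneg s))
      (mul_le_mul_of_nonneg_right hsnorm hQQnn)
  have htQ : (0:ℝ) ≤ |t| * (C₀ * (N ^ (1 - σ) * (Real.log z ^ ((D:ℝ) - m)
      * Real.log N ^ (1 - (A - (m:ℝ))) + N ^ (-(δ / Real.log z))))) := mul_nonneg (abs_nonneg t) hQnn
  have key : ∀ a b sbM sbN mσ nσ ns I Q' : ℝ,
      0 ≤ |t| * Q' →
      a ≤ (sbM + sbN) * mσ → b ≤ ns * I →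
      sbM * mσ ≤ 2 * Q' → sbN * nσ ≤ 2 * Q' → sbN * mσ ≤ sbN * nσ →
      ns * I ≤ 2 * (1 + |t|) * ((1 / ε + 1 / δ + 2) * Q') →
      a + b ≤ (8 + 2 / ε + 2 / δ) * ((1 + |t|) * Q') := by
    intro a b sbM sbN mσ nσ ns I Q' h0 h1 h2 h3 h4 h5 h6
    ring_nf at h1 h2 h3 h4 h5 h6 ⊢
    linarith
  refine le_trans (norm_add_le _ _) (le_trans
    (key _ _ _ _ _ _ _ _ _ htQ hXb hYb hgenM hgenN hcross hYc) (le_of_eq (by ring)))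
end
end
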